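/- arXiv:1003.2797 — 7 statements merged into one kernel-verified Lean document; each statement's English description precedes it below -/
import Mathlib

section
/- Let Y be an invertible 2m×2m real matrix whose singular values λ_1 ≥ λ_2 ≥ … ≥ λ_{2m} all lie in (0,1]. Then for every 2m×2m real orthogonal matrix V, |det(Y + V)| + |det(Y − V)| ≤ ∏_{k=1}^{2m}(1+λ_k) + ∏_{k=1}^{2m}(1−λ_k). -/
open Matrix

open Finset in
theorem amgm_det {n : Type*} [Fintype n] [DecidableEq n] (G : Matrix n n ℝ)
    (hG : G.PosSemidef) (htr : G.trace = (Fintype.card n : ℝ)) : G.det ≤ 1 := by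
  rcases Nat.eq_zero_or_pos (Fintype.card n) with h0 | hpos
  · have : IsEmpty n := Fintype.card_eq_zero_iff.mp h0
    simp [Matrix.det_isEmpty]
  set c := Fintype.card n with hc
  have hH := hG.isHermitian
  have hdet : G.det = ∏ i, hH.eigenvalues i := hH.det_eq_prod_eigenvalues
  have htr2 : G.trace = ∑ i, hH.eigenvalues i := by
    rw [hH.trace_eq_sum_eigenvalues]
    simp
  have hnn : ∀ i, 0 ≤ hH.eigenvalues i := hG.eigenvalues_nonneg
  have hcpos : (0:ℝ) < c := by exact_mod_cast hpos
  have key : ∏ i, (hH.eigenvalues i) ^ ((1:ℝ)/c) ≤ 1 := by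
    have h := Real.geom_mean_le_arith_mean_weighted Finset.univ (fun _ => (1:ℝ)/c)
      hH.eigenvalues (fun i _ => by positivity)
      (by simp [Finset.sum_const, hc]; exact div_self (ne_of_gt hcpos)) (fun i _ => hnn i)
    calc ∏ i, (hH.eigenvalues i) ^ ((1:ℝ)/c) ≤ ∑ i, (1/c) * hH.eigenvalues i := h
      _ = (1/c) * ∑ i, hH.eigenvalues i := by rw [Finset.mul_sum]
      _ = 1 := by rw [← htr2, htr]; field_simp
  have hprod : (∏ i, hH.eigenvalues i) ^ ((1:ℝ)/c) ≤ 1 := by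
    rwa [← Real.finset_prod_rpow _ _ (fun i _ => hnn i)]
  have hPnn : (0:ℝ) ≤ ∏ i, hH.eigenvalues i := Finset.prod_nonneg (fun i _ => hnn i)
  have heq : (∏ i, hH.eigenvalues i) = ((∏ i, hH.eigenvalues i) ^ ((1:ℝ)/c)) ^ (c:ℝ) := by
    rw [← Real.rpow_mul hPnn]
    rw [one_div_mul_cancel (ne_of_gt hcpos), Real.rpow_one]
  rw [hdet, heq]
  calc ((∏ i, hH.eigenvalues i) ^ ((1:ℝ)/c)) ^ (c:ℝ) ≤ 1 ^ (c:ℝ) :=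
        Real.rpow_le_rpow (Real.rpow_nonneg hPnn _) hprod (le_of_lt hcpos)
    _ = 1 := Real.one_rpow _

theorem det_piecewise_le {n : Type*} [Fintype n] [DecidableEq n]
    (M : Matrix n n ℝ) (hM : M * Mᵀ = 1) (s : Finset n) :
    |(Matrix.of (s.piecewise (1 : Matrix n n ℝ) M)).det| ≤ 1 := by
  set N : Matrix n n ℝ := Matrix.of (s.piecewise (1 : Matrix n n ℝ) M) with hN
  have hPSD : (N * Nᵀ).PosSemidef := by
    have := Matrix.posSemidef_self_mul_conjTranspose N
    rwa [Matrix.conjTranspose_eq_transpose_of_trivial] at this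
  have htr : (N * Nᵀ).trace = (Fintype.card n : ℝ) := by
    rw [Matrix.trace]
    have : ∀ i, (N * Nᵀ).diag i = 1 := by
      intro i
      simp only [Matrix.diag, Matrix.mul_apply, Matrix.transpose_apply]
      by_cases hi : i ∈ s
      · have : ∀ k, N i k = (1 : Matrix n n ℝ) i k := fun k => by
          simp [hN, Finset.piecewise, hi]
        simp only [this]
        simp [Matrix.one_apply]
      · have : ∀ k, N i k = M i k := fun k => by
          simp [hN, Finset.piecewise, hi]
        simp only [this]
        have := congrFun (congrFun hM i) i
        simpa [Matrix.mul_apply, Matrix.one_apply] using this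
    simp only [Matrix.diag] at this
    simp [this, Finset.card_univ]
  have hdet := amgm_det (N * Nᵀ) hPSD htr
  rw [Matrix.det_mul, Matrix.det_transpose] at hdet
  exact abs_le_one_iff_mul_self_le_one.mpr hdet

open Finset in
theorem det_add_expand {n : Type*} [Fintype n] [DecidableEq n] (lam : n → ℝ)
    (M : Matrix n n ℝ) :
    (Matrix.diagonal lam + M).det
      = ∑ s : Finset n, (∏ i ∈ s, lam i) * (Matrix.of (s.piecewise (1 : Matrix n n ℝ) M)).det := by
  set f := (Matrix.detRowAlternating : AlternatingMap ℝ (n → ℝ) ℝ n) with hf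
  have h1 : (Matrix.diagonal lam + M).det = f (Matrix.diagonal lam + M) := rfl
  rw [h1]
  have h2 : f (Matrix.diagonal lam + M)
      = ∑ s : Finset n, f (s.piecewise (Matrix.diagonal lam) M) :=
    f.toMultilinearMap.map_add_univ (Matrix.diagonal lam) M
  rw [h2]
  refine Finset.sum_congr rfl (fun s _ => ?_)
  have h3 : s.piecewise (Matrix.diagonal lam) M
      = s.piecewise (fun i => lam i • (s.piecewise (1 : Matrix n n ℝ) M) i)
          (s.piecewise (1 : Matrix n n ℝ) M) := by
    funext i
    by_cases hi : i ∈ s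
    · simp only [Finset.piecewise, hi, ↓reduceIte]
      funext j
      simp [Matrix.diagonal_apply, Matrix.one_apply, mul_ite]
    · simp only [Finset.piecewise, hi, ↓reduceIte]
  rw [h3]
  have h4 := f.toMultilinearMap.map_piecewise_smul lam (s.piecewise (1 : Matrix n n ℝ) M) s
  rw [show (⇑f) = ⇑f.toMultilinearMap from rfl, h4]
  rw [smul_eq_mul]
  rfl

open Finset in
theorem det_neg_piecewise {n : Type*} [Fintype n] [DecidableEq n]
    (M : Matrix n n ℝ) (s : Finset n) :
    (Matrix.of (s.piecewise (1 : Matrix n n ℝ) (-M))).det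
      = (-1 : ℝ) ^ (sᶜ.card) * (Matrix.of (s.piecewise (1 : Matrix n n ℝ) M)).det := by
  set f := (Matrix.detRowAlternating : AlternatingMap ℝ (n → ℝ) ℝ n) with hf
  set N : Matrix n n ℝ := Matrix.of (s.piecewise (1 : Matrix n n ℝ) M) with hN
  have h3 : (Matrix.of (s.piecewise (1 : Matrix n n ℝ) (-M)) : Matrix n n ℝ)
      = sᶜ.piecewise (fun i => (-1 : ℝ) • (N : n → n → ℝ) i) N := by
    funext i
    by_cases hi : i ∈ s
    · have hi' : i ∉ sᶜ := by simp [hi]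
      simp only [Finset.piecewise, hi', ↓reduceIte]
      show s.piecewise (1 : Matrix n n ℝ) (-M) i = N i
      rw [hN]
      show s.piecewise (1 : Matrix n n ℝ) (-M) i = s.piecewise (1 : Matrix n n ℝ) M i
      simp only [Finset.piecewise, hi, ↓reduceIte]
    · have hi' : i ∈ sᶜ := by simp [hi]
      simp only [Finset.piecewise, hi', ↓reduceIte]
      show s.piecewise (1 : Matrix n n ℝ) (-M) i = (-1 : ℝ) • (s.piecewise (1 : Matrix n n ℝ) M) i
      simp only [Finset.piecewise, hi, ↓reduceIte]
      funext j
      simp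
  show f _ = _
  rw [h3]
  have h4 := f.toMultilinearMap.map_piecewise_smul (fun _ => (-1 : ℝ)) (N : n → n → ℝ) sᶜ
  rw [show (⇑f) = ⇑f.toMultilinearMap from rfl, h4]
  rw [smul_eq_mul, Finset.prod_const]
  rfl

theorem abs_add_le_max (x y : ℝ) : |x| + |y| ≤ max |x + y| |x - y| := by
  rcases le_total 0 x with hx | hx <;> rcases le_total 0 y with hy | hy
  · refine le_trans ?_ (le_max_left _ _)
    rw [abs_of_nonneg hx, abs_of_nonneg hy]
    have : |x + y| = x + y := abs_of_nonneg (by linarith)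
    linarith
  · refine le_trans ?_ (le_max_right _ _)
    rw [abs_of_nonneg hx, abs_of_nonpos hy]
    have : |x - y| = x - y := abs_of_nonneg (by linarith)
    linarith
  · refine le_trans ?_ (le_max_right _ _)
    rw [abs_of_nonpos hx, abs_of_nonneg hy]
    have : |x - y| = -(x - y) := abs_of_nonpos (by linarith)
    linarith
  · refine le_trans ?_ (le_max_left _ _)
    rw [abs_of_nonpos hx, abs_of_nonpos hy]
    have : |x + y| = -(x + y) := abs_of_nonpos (by linarith)
    linarith

open Finset in
theorem core {n : Type*} [Fintype n] [DecidableEq n] (hcard : Even (Fintype.card n))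
    (lam : n → ℝ) (h0 : ∀ i, 0 ≤ lam i) (h1 : ∀ i, lam i ≤ 1)
    (M : Matrix n n ℝ) (hM : M * Mᵀ = 1) :
    |(Matrix.diagonal lam + M).det| + |(Matrix.diagonal lam - M).det|
      ≤ ∏ i, (1 + lam i) + ∏ i, (1 - lam i) := by
  set p : Finset n → ℝ := fun s => ∏ i ∈ s, lam i with hp
  set d : Finset n → ℝ := fun s => (Matrix.of (s.piecewise (1 : Matrix n n ℝ) M)).det with hd
  set e : Finset n → ℝ := fun s => (-1 : ℝ) ^ (sᶜ.card) with he
  have hpnn : ∀ s, 0 ≤ p s := fun s => Finset.prod_nonneg (fun i _ => h0 i)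
  have hdle : ∀ s, |d s| ≤ 1 := fun s => det_piecewise_le M hM s
  have hx : (Matrix.diagonal lam + M).det = ∑ s : Finset n, p s * d s := det_add_expand lam M
  have hy : (Matrix.diagonal lam - M).det = ∑ s : Finset n, e s * (p s * d s) := by
    rw [sub_eq_add_neg, det_add_expand lam (-M)]
    refine Finset.sum_congr rfl (fun s _ => ?_)
    rw [det_neg_piecewise M s]
    ring
  -- product identities
  have hP : ∏ i, (1 + lam i) = ∑ s : Finset n, p s := by
    have := Finset.prod_add lam (fun _ => (1:ℝ)) Finset.univ
    simp only [Finset.prod_const_one, mul_one] at this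
    rw [show (fun i => (1:ℝ) + lam i) = (fun i => lam i + 1) from funext (fun i => add_comm _ _)]
    rw [this, Finset.powerset_univ]
  have hQ : ∏ i, (1 - lam i) = ∑ s : Finset n, p s * e s := by
    have h2 := Finset.prod_add lam (fun _ => (-1:ℝ)) Finset.univ
    simp only [Finset.prod_const] at h2
    have h3 : ∏ i, (lam i + (-1)) = (-1:ℝ) ^ (Fintype.card n) * ∏ i, (1 - lam i) := by
      rw [← Finset.card_univ, ← Finset.prod_const, ← Finset.prod_mul_distrib]
      exact Finset.prod_congr rfl (fun i _ => by ring)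
    have h4 : ((-1:ℝ)) ^ (Fintype.card n) = 1 := hcard.neg_one_pow
    rw [h4, one_mul] at h3
    rw [← h3, h2, Finset.powerset_univ]
    refine Finset.sum_congr rfl (fun s _ => ?_)
    simp [he, hp, Finset.compl_eq_univ_sdiff]
  have hQnn : 0 ≤ ∏ i, (1 - lam i) := Finset.prod_nonneg (fun i _ => by linarith [h1 i])
  -- bound |x + y|
  have hxy : |(Matrix.diagonal lam + M).det + (Matrix.diagonal lam - M).det|
      ≤ ∏ i, (1 + lam i) + ∏ i, (1 - lam i) := by
    rw [hx, hy, ← Finset.sum_add_distrib, hP, hQ, ← Finset.sum_add_distrib]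
    refine le_trans (Finset.abs_sum_le_sum_abs _ _) (Finset.sum_le_sum (fun s _ => ?_))
    have he1 : e s = 1 ∨ e s = -1 := by
      rw [he]; rcases Nat.even_or_odd (sᶜ.card) with h | h
      · left; exact h.neg_one_pow
      · right; exact h.neg_one_pow
    have habs : |p s * d s + e s * (p s * d s)| = |1 + e s| * (p s * |d s|) := by
      rw [show p s * d s + e s * (p s * d s) = (1 + e s) * (p s * d s) by ring, abs_mul, abs_mul,
        abs_of_nonneg (hpnn s)]
    rw [habs]
    have h5 : |1 + e s| = 1 + e s := by
      rcases he1 with h | h <;> rw [h] <;> norm_num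
    rw [h5]
    have h6 : p s * |d s| ≤ p s := by
      calc p s * |d s| ≤ p s * 1 := mul_le_mul_of_nonneg_left (hdle s) (hpnn s)
        _ = p s := mul_one _
    have h7 : 0 ≤ 1 + e s := by rcases he1 with h | h <;> rw [h] <;> norm_num
    calc (1 + e s) * (p s * |d s|) ≤ (1 + e s) * p s := mul_le_mul_of_nonneg_left h6 h7
      _ = p s + p s * e s := by ring
  -- bound |x - y|
  have hxy2 : |(Matrix.diagonal lam + M).det - (Matrix.diagonal lam - M).det|
      ≤ ∏ i, (1 + lam i) + ∏ i, (1 - lam i) := by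
    have hle2 : |(Matrix.diagonal lam + M).det - (Matrix.diagonal lam - M).det|
        ≤ ∏ i, (1 + lam i) - ∏ i, (1 - lam i) := by
      rw [hx, hy, ← Finset.sum_sub_distrib, hP, hQ, ← Finset.sum_sub_distrib]
      refine le_trans (Finset.abs_sum_le_sum_abs _ _) (Finset.sum_le_sum (fun s _ => ?_))
      have he1 : e s = 1 ∨ e s = -1 := by
        rw [he]; rcases Nat.even_or_odd (sᶜ.card) with h | h
        · left; exact h.neg_one_pow
        · right; exact h.neg_one_pow
      have habs : |p s * d s - e s * (p s * d s)| = |1 - e s| * (p s * |d s|) := by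
        rw [show p s * d s - e s * (p s * d s) = (1 - e s) * (p s * d s) by ring, abs_mul, abs_mul,
          abs_of_nonneg (hpnn s)]
      rw [habs]
      have h5 : |1 - e s| = 1 - e s := by
        rcases he1 with h | h <;> rw [h] <;> norm_num
      rw [h5]
      have h6 : p s * |d s| ≤ p s := by
        calc p s * |d s| ≤ p s * 1 := mul_le_mul_of_nonneg_left (hdle s) (hpnn s)
          _ = p s := mul_one _
      have h7 : 0 ≤ 1 - e s := by rcases he1 with h | h <;> rw [h] <;> norm_num
      calc (1 - e s) * (p s * |d s|) ≤ (1 - e s) * p s := mul_le_mul_of_nonneg_left h6 h7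
        _ = p s - p s * e s := by ring
    linarith
  calc |(Matrix.diagonal lam + M).det| + |(Matrix.diagonal lam - M).det|
      ≤ max |(Matrix.diagonal lam + M).det + (Matrix.diagonal lam - M).det|
          |(Matrix.diagonal lam + M).det - (Matrix.diagonal lam - M).det| :=
        abs_add_le_max _ _
    _ ≤ ∏ i, (1 + lam i) + ∏ i, (1 - lam i) := max_le hxy hxy2

theorem det_abs_conj {n : ℕ} (U W A : Matrix (Fin n) (Fin n) ℝ)
    (hU : Uᵀ * U = 1) (hW : Wᵀ * W = 1) :
    |(U * A * Wᵀ).det| = |A.det| := by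
  have hu : U.det * U.det = 1 := by
    have : Uᵀ.det * U.det = 1 := by rw [← Matrix.det_mul, hU, Matrix.det_one]
    rwa [Matrix.det_transpose] at this
  have hw : W.det * W.det = 1 := by
    have : Wᵀ.det * W.det = 1 := by rw [← Matrix.det_mul, hW, Matrix.det_one]
    rwa [Matrix.det_transpose] at this
  have hu' : |U.det| = 1 := by
    rcases mul_self_eq_one_iff.mp hu with h | h <;> rw [h] <;> norm_num
  have hw' : |W.det| = 1 := by
    rcases mul_self_eq_one_iff.mp hw with h | h <;> rw [h] <;> norm_num
  rw [Matrix.det_mul, Matrix.det_mul, abs_mul, abs_mul, Matrix.det_transpose, hu', hw']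
  ring

/-- If `Y` is an invertible `2m × 2m` real matrix whose singular values
`lam 0 ≥ lam 1 ≥ … ≥ lam (2m-1)` (encoded via a singular value decomposition
`Y = U * diagonal lam * Wᵀ` with `U`, `W` real orthogonal) all lie in `(0,1]`,
then for every real orthogonal `V`,
`|det (Y + V)| + |det (Y - V)| ≤ ∏ (1 + lam k) + ∏ (1 - lam k)`. -/
theorem det_sum_bound_orthogonal
    (m : ℕ) (hm : 1 ≤ m) (lam : ℕ → ℝ)
    (hmono : ∀ i j, i ≤ j → j < 2 * m → lam j ≤ lam i)
    (hpos : ∀ k < 2 * m, 0 < lam k)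
    (hle : ∀ k < 2 * m, lam k ≤ 1)
    (Y U W : Matrix (Fin (2 * m)) (Fin (2 * m)) ℝ)
    (hU : Uᵀ * U = 1) (hW : Wᵀ * W = 1)
    (hsvd : Y = U * Matrix.diagonal (fun k : Fin (2 * m) => lam (k : ℕ)) * Wᵀ)
    (V : Matrix (Fin (2 * m)) (Fin (2 * m)) ℝ) (hV : Vᵀ * V = 1) :
    |(Y + V).det| + |(Y - V).det|
      ≤ ∏ k ∈ Finset.range (2 * m), (1 + lam k)
        + ∏ k ∈ Finset.range (2 * m), (1 - lam k) := by
  have hUU : U * Uᵀ = 1 := mul_eq_one_comm.mp hU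
  have hWW : W * Wᵀ = 1 := mul_eq_one_comm.mp hW
  have hVV : V * Vᵀ = 1 := mul_eq_one_comm.mp hV
  set lam' : Fin (2 * m) → ℝ := fun k => lam (k : ℕ) with hlam'
  set D := Matrix.diagonal lam' with hD
  set M := Uᵀ * V * W with hM
  have hMMt : M * Mᵀ = 1 := by
    rw [hM]
    simp only [Matrix.transpose_mul, Matrix.transpose_transpose]
    rw [← Matrix.mul_assoc (Uᵀ * V * W) Wᵀ (Vᵀ * U), Matrix.mul_assoc (Uᵀ * V) W Wᵀ,
      hWW, Matrix.mul_one, ← Matrix.mul_assoc (Uᵀ * V) Vᵀ U, Matrix.mul_assoc Uᵀ V Vᵀ,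
      hVV, Matrix.mul_one, hU]
  have hplus : Y + V = U * (D + M) * Wᵀ := by
    rw [Matrix.mul_add, Matrix.add_mul, ← hsvd, hM]
    congr 1
    rw [← Matrix.mul_assoc U (Uᵀ * V) W, ← Matrix.mul_assoc U Uᵀ V, hUU, Matrix.one_mul,
      Matrix.mul_assoc V W Wᵀ, hWW, Matrix.mul_one]
  have hminus : Y - V = U * (D - M) * Wᵀ := by
    rw [Matrix.mul_sub, Matrix.sub_mul, ← hsvd, hM]
    congr 1
    rw [← Matrix.mul_assoc U (Uᵀ * V) W, ← Matrix.mul_assoc U Uᵀ V, hUU, Matrix.one_mul,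
      Matrix.mul_assoc V W Wᵀ, hWW, Matrix.mul_one]
  rw [hplus, hminus, det_abs_conj U W _ hU hW, det_abs_conj U W _ hU hW]
  have hcard : Even (Fintype.card (Fin (2 * m))) := by
    rw [Fintype.card_fin]
    exact even_two_mul m
  have h0 : ∀ i : Fin (2 * m), 0 ≤ lam' i := fun i => le_of_lt (hpos i i.isLt)
  have h1 : ∀ i : Fin (2 * m), lam' i ≤ 1 := fun i => hle i i.isLt
  have := core hcard lam' h0 h1 M hMMt
  rw [hD]
  refine le_trans this (le_of_eq ?_)
  rw [← Fin.prod_univ_eq_prod_range (fun k => (1:ℝ) + lam k) (2*m),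
    ← Fin.prod_univ_eq_prod_range (fun k => (1:ℝ) - lam k) (2*m)]
end

section
/- Let Λ = diag(λ_1, …, λ_n) be a diagonal n×n matrix and V any n×n matrix (over a commutative ring). Then det(Λ + V) = Σ_{S ⊆ {1,…,n}} (∏_{j∈S} λ_j) · det(V_S), where V_S denotes the (n−|S|)×(n−|S|) matrix obtained from V by deleting all rows and columns with index in S, and det of the empty matrix is 1. -/
open Matrix

lemma det_piecewise_aux {R : Type*} [CommRing R] (n : ℕ) (lam : Fin n → R)
    (V : Matrix (Fin n) (Fin n) R) (S : Finset (Fin n)) :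
    Matrix.det (S.piecewise (Matrix.diagonal lam) V : Matrix (Fin n) (Fin n) R)
      = (∏ j ∈ S, lam j) *
          (V.submatrix (fun i : ↥(Sᶜ) => (i : Fin n))
            (fun i : ↥(Sᶜ) => (i : Fin n))).det := by
  classical
  set M : Matrix (Fin n) (Fin n) R := S.piecewise (Matrix.diagonal lam) V with hM
  let e : {x // x ∈ S} ⊕ {x // ¬ x ∈ S} ≃ Fin n := Equiv.sumCompl (· ∈ S)
  rw [← Matrix.det_submatrix_equiv_self e]
  have hm : ∀ a ∈ S, (S.piecewise (Matrix.diagonal lam) V : Matrix (Fin n) (Fin n) R) a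
      = Matrix.diagonal lam a := fun a ha => Finset.piecewise_eq_of_mem _ _ _ ha
  have hn : ∀ a ∉ S, (S.piecewise (Matrix.diagonal lam) V : Matrix (Fin n) (Fin n) R) a
      = V a := fun a ha => Finset.piecewise_eq_of_notMem _ _ _ ha
  have hsub : M.submatrix e e
      = Matrix.fromBlocks (Matrix.diagonal fun i : {x // x ∈ S} => lam i) 0
          (V.submatrix (fun i : {x // ¬ x ∈ S} => (i : Fin n))
            (fun j : {x // x ∈ S} => (j : Fin n)))
          (V.submatrix (fun i : {x // ¬ x ∈ S} => (i : Fin n))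
            (fun j : {x // ¬ x ∈ S} => (j : Fin n))) := by
    ext i j
    rw [Matrix.submatrix_apply]
    cases i with
    | inl i =>
      cases j with
      | inl j =>
        simp only [Matrix.submatrix_apply, Matrix.fromBlocks_apply₁₁, e, Equiv.sumCompl_apply_inl,
          hM, hm _ i.2, Matrix.diagonal_apply]
        by_cases h : i = j
        · subst h; simp
        · rw [if_neg (fun h' => h (Subtype.ext h')), if_neg h]
      | inr j =>
        simp only [Matrix.submatrix_apply, Matrix.fromBlocks_apply₁₂, e, Equiv.sumCompl_apply_inl,
          Equiv.sumCompl_apply_inr, hM, hm _ i.2, Matrix.diagonal_apply]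
        rw [if_neg]
        · rfl
        · intro h; exact j.2 (h ▸ i.2)
    | inr i =>
      cases j with
      | inl j =>
        simp [e, hM, hn _ i.2]
      | inr j =>
        simp [e, hM, hn _ i.2]
  rw [hsub, Matrix.det_fromBlocks_zero₁₂, Matrix.det_diagonal]
  congr 1
  · exact (Finset.prod_coe_sort S lam)
  · let e' : {x : Fin n // ¬ x ∈ S} ≃ {x : Fin n // x ∈ Sᶜ} :=
      Equiv.subtypeEquivRight fun x => (Finset.mem_compl).symm
    rw [← Matrix.det_submatrix_equiv_self e'
      (V.submatrix (fun i : ↥(Sᶜ) => (i : Fin n)) (fun i : ↥(Sᶜ) => (i : Fin n)))]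
    rfl

/-- Expansion of `det (diagonal lam + V)` over a commutative ring:
`det (Λ + V) = ∑_{S ⊆ {1,…,n}} (∏ j ∈ S, lam j) * det V_S`, where `V_S` is
the submatrix of `V` obtained by deleting the rows and columns indexed by `S`
(i.e. restricting to the complement of `S`), and the determinant of the empty
matrix is `1`. -/
theorem det_diagonal_add_expansion
    {R : Type*} [CommRing R] (n : ℕ) (lam : Fin n → R)
    (V : Matrix (Fin n) (Fin n) R) :
    (Matrix.diagonal lam + V).det
      = ∑ S : Finset (Fin n),
          (∏ j ∈ S, lam j) *
            (V.submatrix (fun i : ↥(Sᶜ) => (i : Fin n))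
              (fun i : ↥(Sᶜ) => (i : Fin n))).det := by
  classical
  have h := (Matrix.detRowAlternating (R := R) (n := Fin n)).toMultilinearMap.map_add_univ
    (Matrix.diagonal lam) V
  have h2 : (Matrix.diagonal lam + V).det
      = ∑ s : Finset (Fin n),
          Matrix.det (s.piecewise (Matrix.diagonal lam) V : Matrix (Fin n) (Fin n) R) := h
  rw [h2]
  exact Finset.sum_congr rfl fun S _ => det_piecewise_aux n lam V S
end

section
/- Let V be an n×n real orthogonal matrix and let i_1 < … < i_k and j_1 < … < j_k be indices in {1,…,n}. Then the k×k submatrix W with entries W_{ab} = V_{i_a j_b} satisfies |det W| ≤ 1. -/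
open Matrix

lemma det_le_one_of_posSemidef {k : ℕ} (H : Matrix (Fin k) (Fin k) ℝ)
    (hH : H.PosSemidef) (h1 : (1 - H).PosSemidef) : H.det ≤ 1 := by
  have hdet : H.det = ∏ i, hH.1.eigenvalues i := by
    have := hH.1.det_eq_prod_eigenvalues
    simpa using this
  rw [hdet]
  apply Finset.prod_le_one
  · intro i _
    exact hH.eigenvalues_nonneg i
  · intro i _
    set v := ⇑(hH.1.eigenvectorBasis i) with hv
    have hnorm : dotProduct (star v) v = 1 := by
      have h := hH.1.eigenvectorBasis.orthonormal.1 i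
      have : (inner ℝ (hH.1.eigenvectorBasis i) (hH.1.eigenvectorBasis i) : ℝ) = 1 := by
        rw [real_inner_self_eq_norm_sq, h]; norm_num
      rwa [EuclideanSpace.inner_eq_star_dotProduct, dotProduct_comm] at this
    have heig := hH.1.eigenvalues_eq i
    have hpos := h1.re_dotProduct_nonneg v
    simp only [sub_mulVec, one_mulVec, dotProduct_sub, RCLike.re_to_real] at hpos
    rw [hnorm] at hpos
    simp only [RCLike.re_to_real] at heig
    rw [← hv] at heig
    linarith [hpos, heig.le, heig.ge]

/-- Any square submatrix of a real orthogonal matrix (obtained by selecting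
rows `i_1 < … < i_k` and columns `j_1 < … < j_k`) has determinant of absolute
value at most `1`. -/
theorem abs_det_submatrix_orthogonal_le_one
    (n k : ℕ) (V : Matrix (Fin n) (Fin n) ℝ) (hV : Vᵀ * V = 1)
    (f g : Fin k → Fin n) (hf : StrictMono f) (hg : StrictMono g) :
    |(V.submatrix f g).det| ≤ 1 := by
  set W := V.submatrix f g with hW
  set C := V.submatrix id g with hC
  have hCtC : Cᵀ * C = 1 := by
    ext a b
    simp only [hC, mul_apply, transpose_apply, submatrix_apply, id_eq]
    have := congrFun (congrFun hV (g a)) (g b)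
    simp only [mul_apply, transpose_apply] at this
    rw [this]
    by_cases hab : a = b
    · subst hab; simp
    · rw [Matrix.one_apply_ne hab, Matrix.one_apply_ne (fun h => hab (hg.injective h))]
  set M := (1 : Matrix (Fin n) (Fin n) ℝ) - C * Cᵀ with hM
  have hMsymm : Mᵀ = M := by
    simp [hM, transpose_sub, transpose_mul, transpose_transpose]
  have hMsq : M = Mᴴ * M := by
    have : Mᴴ = M := by
      rw [show Mᴴ = Mᵀ from rfl, hMsymm]
    rw [this, hM]
    rw [sub_mul, one_mul, mul_sub, mul_one]
    rw [show C * Cᵀ * (C * Cᵀ) = C * (Cᵀ * C) * Cᵀ by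
      simp only [Matrix.mul_assoc], hCtC, Matrix.mul_one]
    abel
  have hMpsd : M.PosSemidef := by
    rw [hMsq]; exact posSemidef_conjTranspose_mul_self M
  have hsub : M.submatrix f f = 1 - W * Wᵀ := by
    ext a b
    simp only [hM, hW, hC, submatrix_apply, Matrix.sub_apply, Matrix.one_apply,
      mul_apply, transpose_apply, id_eq, hf.injective.eq_iff]
  have h1WWt : ((1 : Matrix (Fin k) (Fin k) ℝ) - W * Wᵀ).PosSemidef := by
    rw [← hsub]; exact hMpsd.submatrix f
  have hWWt : (W * Wᵀ).PosSemidef := by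
    have := posSemidef_self_mul_conjTranspose W
    simpa using this
  have hdet : (W * Wᵀ).det ≤ 1 := det_le_one_of_posSemidef _ hWWt h1WWt
  rw [Matrix.det_mul, Matrix.det_transpose] at hdet
  nlinarith [sq_abs W.det, abs_nonneg W.det]
end

section
/- Let λ_1, …, λ_n ∈ [0,1] and let Γ₊ ⊆ {1,…,n} with complement Γ₋ = {1,…,n} \ Γ₊. Then ∏_{j∈Γ₊}(1+λ_j) ∏_{k∈Γ₋}(1−λ_k) + ∏_{j∈Γ₋}(1+λ_j) ∏_{k∈Γ₊}(1−λ_k) ≤ ∏_{j=1}^{n}(1+λ_j) + ∏_{j=1}^{n}(1−λ_j); i.e. among all two-set partitions of the index set, the quantity fid(Γ₊,Γ₋) + fid(Γ₋,Γ₊), with fid(Γ₊,Γ₋) := ∏_{j∈Γ₊}(1+λ_j)∏_{k∈Γ₋}(1−λ_k), is maximized by the trivial partition Γ₊ = {1,…,n}, Γ₋ = ∅. -/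
/-- For `lam 1, …, lam n ∈ [0,1]` and any subset `G ⊆ {1,…,n}` with complement
`Gᶜ`, the quantity `fid(G,Gᶜ) + fid(Gᶜ,G)`, where
`fid(Γ₊,Γ₋) = ∏_{j∈Γ₊}(1+lam j) ∏_{k∈Γ₋}(1−lam k)`, is at most
`∏_j (1+lam j) + ∏_j (1−lam j)`, the value at the trivial partition. -/
theorem fid_partition_le
    (n : ℕ) (lam : Fin n → ℝ) (hlam : ∀ j, lam j ∈ Set.Icc (0 : ℝ) 1)
    (G : Finset (Fin n)) :
    (∏ j ∈ G, (1 + lam j)) * (∏ k ∈ Gᶜ, (1 - lam k))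
        + (∏ j ∈ Gᶜ, (1 + lam j)) * (∏ k ∈ G, (1 - lam k))
      ≤ ∏ j, (1 + lam j) + ∏ j, (1 - lam j) := by
  have hnn : ∀ (S : Finset (Fin n)), (0:ℝ) ≤ ∏ k ∈ S, (1 - lam k) := fun S =>
    Finset.prod_nonneg (fun j _ => by have := (hlam j).2; linarith)
  have hle : ∀ (S : Finset (Fin n)),
      (∏ k ∈ S, (1 - lam k)) ≤ ∏ j ∈ S, (1 + lam j) := fun S =>
    Finset.prod_le_prod (fun j _ => by have := (hlam j).2; linarith)
      (fun j _ => by have := (hlam j).1; linarith)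
  have h1 : ∏ j, (1 + lam j) = (∏ j ∈ G, (1 + lam j)) * ∏ j ∈ Gᶜ, (1 + lam j) :=
    (Finset.prod_mul_prod_compl G _).symm
  have h2 : ∏ j, (1 - lam j) = (∏ j ∈ G, (1 - lam j)) * ∏ j ∈ Gᶜ, (1 - lam j) :=
    (Finset.prod_mul_prod_compl G _).symm
  rw [h1, h2]
  nlinarith [hle G, hle Gᶜ, hnn G, hnn Gᶜ,
    mul_nonneg (sub_nonneg.2 (hle G)) (sub_nonneg.2 (hle Gᶜ))]
end

section
/- Let Y be a 2L×2L real matrix all of whose singular values are at most 1, listed in decreasing order λ_1 ≥ λ_2 ≥ … ≥ λ_{2L} ≥ 0. Let 2 ≤ m ≤ L, let A and B be 2L×2m real matrices with orthonormal columns (Aᵀ A = Bᵀ B = 1_{2m}), and let V be any 2m×2m real orthogonal matrix. Then |det(Aᵀ Y B + V)| + |det(Aᵀ Y B − V)| ≤ ∏_{k=1}^{2m}(1+λ_k) + ∏_{k=1}^{2m}(1−λ_k). -/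
open Matrix Finset

namespace CompressionAux

/-- The finset of strictly monotone maps `Fin j → Fin n`. -/
def SM (j n : ℕ) : Finset (Fin j → Fin n) := Finset.univ.filter StrictMono

lemma mem_SM {j n : ℕ} {g : Fin j → Fin n} : g ∈ SM j n ↔ StrictMono g := by
  simp [SM]

lemma SM_card_le {j n : ℕ} {g : Fin j → Fin n} (hg : g ∈ SM j n) : j ≤ n := by
  simpa using Fintype.card_le_of_injective g (mem_SM.mp hg).injective

lemma image_card {j n : ℕ} {g : Fin j → Fin n} (hg : StrictMono g) :
    (Finset.univ.image g).card = j := by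
  rw [Finset.card_image_of_injective _ hg.injective, Finset.card_univ, Fintype.card_fin]

/-- Bridge between sums over strictly monotone maps and sums over subsets of fixed size. -/
lemma sum_SM_eq_sum_powersetCard {n : ℕ} (j : ℕ) (F : Finset (Fin n) → ℝ) :
    ∑ g ∈ SM j n, F (Finset.univ.image g)
      = ∑ T ∈ Finset.powersetCard j (Finset.univ : Finset (Fin n)), F T := by
  refine Finset.sum_bij (fun g _ => Finset.univ.image g) ?_ ?_ ?_ ?_
  · intro g hg
    rw [Finset.mem_powersetCard]
    exact ⟨Finset.subset_univ _, image_card (mem_SM.mp hg)⟩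
  · intro g₁ h₁ g₂ h₂ he
    have hee : (Finset.univ.image g₁ : Finset (Fin n)) = Finset.univ.image g₂ := he
    have c₁ : (Finset.univ.image g₁).card = j := image_card (mem_SM.mp h₁)
    have e₁ := Finset.orderEmbOfFin_unique c₁ (f := g₁)
      (fun x => Finset.mem_image_of_mem _ (Finset.mem_univ x)) (mem_SM.mp h₁)
    have e₂ := Finset.orderEmbOfFin_unique c₁ (f := g₂)
      (fun x => hee ▸ Finset.mem_image_of_mem _ (Finset.mem_univ x)) (mem_SM.mp h₂)
    exact e₁.trans e₂.symm
  · intro T hT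
    rw [Finset.mem_powersetCard] at hT
    refine ⟨T.orderEmbOfFin hT.2, mem_SM.mpr (T.orderEmbOfFin hT.2).strictMono, ?_⟩
    apply Finset.coe_injective
    rw [Finset.coe_image, Finset.coe_univ, Set.image_univ]
    exact (Finset.range_orderEmbOfFin T hT.2)
  · intros; rfl

lemma submatrix_one {j n : ℕ} {g : Fin j → Fin n} (hg : Function.Injective g) :
    (1 : Matrix (Fin n) (Fin n) ℝ).submatrix g g = 1 := by
  ext a b
  simp [Matrix.one_apply, hg.eq_iff]

/-- determinant of a matrix whose rows outside the image of `g` are unit rows -/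
lemma det_unit_rows {n j : ℕ} (M : Matrix (Fin n) (Fin n) ℝ) (g : Fin j → Fin n)
    (hg : StrictMono g) (hM : ∀ i, i ∉ Finset.univ.image g → M i = Pi.single i 1) :
    M.det = (M.submatrix g g).det := by
  classical
  set S : Finset (Fin n) := Finset.univ.image g with hS
  have hScard : S.card = j := image_card hg
  have hCcard : Sᶜ.card = n - j := by
    rw [Finset.card_compl, hScard, Fintype.card_fin]
  set gc : Fin (n - j) → Fin n := ⇑(Sᶜ.orderEmbOfFin hCcard) with hgc
  have hgcmem : ∀ i, gc i ∈ Sᶜ := fun i => Finset.orderEmbOfFin_mem _ _ _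
  have hgmem : ∀ a, g a ∈ S := fun a => Finset.mem_image_of_mem _ (Finset.mem_univ a)
  have hbij : Function.Bijective (Sum.elim g gc) := by
    constructor
    · intro x y hxy
      cases x with
      | inl a => cases y with
        | inl b => simp only [Sum.elim_inl] at hxy; exact congrArg Sum.inl (hg.injective hxy)
        | inr b =>
          exfalso
          simp only [Sum.elim_inl, Sum.elim_inr] at hxy
          have h2 := hgcmem b
          rw [Finset.mem_compl] at h2
          exact h2 (hxy ▸ hgmem a)
      | inr a => cases y with
        | inl b =>
          exfalso
          simp only [Sum.elim_inl, Sum.elim_inr] at hxy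
          have h2 := hgcmem a
          rw [Finset.mem_compl] at h2
          exact h2 (hxy.symm ▸ hgmem b)
        | inr b =>
          simp only [Sum.elim_inr] at hxy
          exact congrArg Sum.inr ((Sᶜ.orderEmbOfFin hCcard).injective hxy)
    · intro x
      by_cases hx : x ∈ S
      · obtain ⟨a, _, ha⟩ := Finset.mem_image.mp hx
        exact ⟨Sum.inl a, ha⟩
      · have h3 : x ∈ Set.range ⇑(Sᶜ.orderEmbOfFin hCcard) := by
          rw [Finset.range_orderEmbOfFin]; simpa using hx
        obtain ⟨a, ha⟩ := h3
        exact ⟨Sum.inr a, ha⟩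
  set E := Equiv.ofBijective _ hbij with hE
  have h1 : M.det = (M.submatrix E E).det := (Matrix.det_submatrix_equiv_self E M).symm
  have h2 : M.submatrix E E =
      Matrix.fromBlocks (M.submatrix g g) (M.submatrix g gc) 0 1 := by
    ext x y
    cases x with
    | inl a => cases y with
      | inl b => rfl
      | inr b => rfl
    | inr a => cases y with
      | inl b =>
        have hcompl := Finset.mem_compl.mp (hgcmem a)
        have hrow := hM (gc a) hcompl
        show M (gc a) (g b) = 0
        rw [hrow]
        exact Pi.single_eq_of_ne (fun h => hcompl (by rw [← h]; exact hgmem b)) 1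
      | inr b =>
        have hcompl := Finset.mem_compl.mp (hgcmem a)
        have hrow := hM (gc a) hcompl
        show M (gc a) (gc b) = (1 : Matrix (Fin (n-j)) (Fin (n-j)) ℝ) a b
        rw [hrow]
        by_cases hab : a = b
        · subst hab; simp [Matrix.one_apply]
        · have hne : gc b ≠ gc a :=
            fun h => hab ((Sᶜ.orderEmbOfFin hCcard).injective h).symm
          rw [Pi.single_eq_of_ne hne 1]
          simp [Matrix.one_apply, hab]
  rw [h1, h2, Matrix.det_fromBlocks_zero₂₁, Matrix.det_one, mul_one]

lemma det_one_add_expansion {n : ℕ} (G : Matrix (Fin n) (Fin n) ℝ) :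
    (1 + G).det = ∑ j ∈ Finset.range (n+1), ∑ g ∈ SM j n, (G.submatrix g g).det := by
  classical
  set F : Finset (Fin n) → ℝ :=
    fun S => Matrix.det (Matrix.of (S.piecewise (fun i => G i) (fun i => Pi.single i 1))) with hF
  have key : (1 + G) = Matrix.of ((fun i => G i) + (fun i => (Pi.single i 1 : Fin n → ℝ))) := by
    ext i l
    have hofl : Matrix.of ((fun i => G i) + (fun i => (Pi.single i 1 : Fin n → ℝ))) i l
        = G i l + (Pi.single i 1 : Fin n → ℝ) l := rfl
    rw [hofl, Matrix.add_apply, add_comm]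
    congr 1
    by_cases h : i = l <;> simp [h, Matrix.one_apply, Pi.single_apply]
  have h0 : (1 + G).det = ∑ S ∈ (Finset.univ : Finset (Finset (Fin n))), F S := by
    rw [key]
    exact (Matrix.detRowAlternating :
      (Fin n → ℝ) [⋀^Fin n]→ₗ[ℝ] ℝ).toMultilinearMap.map_add_univ
        (fun i => G i) (fun i => (Pi.single i 1 : Fin n → ℝ))
  have hmap : ∀ S ∈ (Finset.univ : Finset (Finset (Fin n))), S.card ∈ Finset.range (n+1) := by
    intro S _
    rw [Finset.mem_range]
    exact Nat.lt_succ_of_le (by simpa using Finset.card_le_card (Finset.subset_univ S))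
  have h2 : ∑ S ∈ (Finset.univ : Finset (Finset (Fin n))), F S
      = ∑ j ∈ Finset.range (n+1),
          ∑ S ∈ (Finset.univ : Finset (Finset (Fin n))).filter (fun S => S.card = j), F S :=
    (Finset.sum_fiberwise_of_maps_to hmap F).symm
  rw [h0, h2]
  refine Finset.sum_congr rfl fun j _ => ?_
  have h3 : (Finset.univ : Finset (Finset (Fin n))).filter (fun S => S.card = j)
      = Finset.powersetCard j (Finset.univ : Finset (Fin n)) := by
    rw [Finset.powersetCard_eq_filter, Finset.powerset_univ]
  rw [h3, ← sum_SM_eq_sum_powersetCard]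
  refine Finset.sum_congr rfl fun g hg => ?_
  have hgs := mem_SM.mp hg
  show (Matrix.of ((Finset.univ.image g).piecewise (fun i => G i) (fun i => Pi.single i 1))).det
      = (G.submatrix g g).det
  have h5 := det_unit_rows
    (Matrix.of ((Finset.univ.image g).piecewise (fun i => G i) (fun i => Pi.single i 1))) g hgs ?_
  · rw [h5]
    congr 1
    ext a b
    show ((Finset.univ.image g).piecewise (fun i => G i) (fun i => Pi.single i 1)) (g a) (g b)
        = G (g a) (g b)
    rw [Finset.piecewise_eq_of_mem _ _ _ (Finset.mem_image_of_mem _ (Finset.mem_univ a))]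
  · intro i hi
    show ((Finset.univ.image g).piecewise (fun i => G i) (fun i => Pi.single i 1)) i = Pi.single i 1
    rw [Finset.piecewise_eq_of_notMem _ _ _ hi]

lemma cauchy_binet {n j : ℕ} (w : Fin n → ℝ) (X Z : Matrix (Fin n) (Fin j) ℝ) :
    (Xᵀ * Matrix.diagonal w * Z).det
      = ∑ g ∈ SM j n, (∏ i, w (g i)) * ((X.submatrix g id).det * (Z.submatrix g id).det) := by
  classical
  set T : (Fin j → Fin n) → ℝ :=
    fun φ => (∏ a, (X (φ a) a * w (φ a))) * (Z.submatrix φ id).det with hT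
  have hM : (Xᵀ * Matrix.diagonal w * Z)
      = Matrix.of (fun a => ∑ k : Fin n, (X k a * w k) • Z k) := by
    ext a b
    show (Xᵀ * Matrix.diagonal w * Z) a b = (∑ k : Fin n, (X k a * w k) • Z k) b
    rw [Finset.sum_apply]
    rw [Matrix.mul_apply]
    refine Finset.sum_congr rfl fun k _ => ?_
    rw [Matrix.mul_diagonal]
    simp [Matrix.transpose_apply, mul_assoc]
  have h1 : (Xᵀ * Matrix.diagonal w * Z).det = ∑ φ : Fin j → Fin n, T φ := by
    rw [hM]
    calc (Matrix.of (fun a => ∑ k : Fin n, (X k a * w k) • Z k)).det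
        = (Matrix.detRowAlternating :
            (Fin j → ℝ) [⋀^Fin j]→ₗ[ℝ] ℝ).toMultilinearMap
            (fun a => ∑ k : Fin n, (X k a * w k) • Z k) := rfl
      _ = ∑ φ : Fin j → Fin n, (Matrix.detRowAlternating :
            (Fin j → ℝ) [⋀^Fin j]→ₗ[ℝ] ℝ).toMultilinearMap
            (fun a => (X (φ a) a * w (φ a)) • Z (φ a)) := by
          exact MultilinearMap.map_sum _ _
      _ = ∑ φ : Fin j → Fin n, T φ := by
          refine Finset.sum_congr rfl fun φ _ => ?_
          rw [MultilinearMap.map_smul_univ]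
          rw [smul_eq_mul, hT]
          rfl
  rw [h1]
  have hsplit : ∑ φ : Fin j → Fin n, T φ
      = ∑ φ ∈ Finset.univ.filter (fun φ : Fin j → Fin n => Function.Injective φ), T φ
        + ∑ φ ∈ Finset.univ.filter (fun φ : Fin j → Fin n => ¬ Function.Injective φ), T φ :=
    (Finset.sum_filter_add_sum_filter_not _ _ _).symm
  have hzero : ∑ φ ∈ Finset.univ.filter (fun φ : Fin j → Fin n => ¬ Function.Injective φ), T φ
      = 0 := by
    refine Finset.sum_eq_zero fun φ hφ => ?_
    obtain ⟨a, b, hab, hne⟩ := Function.not_injective_iff.mp (Finset.mem_filter.mp hφ).2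
    have : (Z.submatrix φ id).det = 0 := by
      refine Matrix.det_zero_of_row_eq hne ?_
      funext c
      show Z (φ a) c = Z (φ b) c
      rw [hab]
    rw [hT]
    simp only []
    rw [this, mul_zero]
  rw [hsplit, hzero, add_zero]
  have hbij : ∑ φ ∈ Finset.univ.filter (fun φ : Fin j → Fin n => Function.Injective φ), T φ
      = ∑ p ∈ (SM j n) ×ˢ (Finset.univ : Finset (Equiv.Perm (Fin j))), T (p.1 ∘ ⇑p.2) := by
    refine Finset.sum_nbij' (i := fun φ => (φ ∘ ⇑(Tuple.sort φ), (Tuple.sort φ)⁻¹))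
      (j := fun p => p.1 ∘ ⇑p.2) ?_ ?_ ?_ ?_ ?_
    · intro φ hφ
      have hinj : Function.Injective φ := (Finset.mem_filter.mp hφ).2
      rw [Finset.mem_product]
      constructor
      · exact mem_SM.mpr ((Tuple.monotone_sort φ).strictMono_of_injective
          (hinj.comp (Tuple.sort φ).injective))
      · exact Finset.mem_univ _
    · intro p hp
      rw [Finset.mem_product] at hp
      rw [Finset.mem_filter]
      exact ⟨Finset.mem_univ _, (mem_SM.mp hp.1).injective.comp p.2.injective⟩
    · intro φ hφ
      funext x
      show φ ((Tuple.sort φ) (((Tuple.sort φ))⁻¹ x)) = φ x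
      rw [Equiv.Perm.inv_def, Equiv.apply_symm_apply]
    · intro p hp
      rw [Finset.mem_product] at hp
      obtain ⟨g, σ⟩ := p
      have hg := mem_SM.mp hp.1
      have hcomp : (g ∘ ⇑σ) ∘ ⇑σ⁻¹ = g := by
        funext x
        show g (σ (σ⁻¹ x)) = g x
        rw [Equiv.Perm.inv_def, Equiv.apply_symm_apply]
      have hsort : Tuple.sort (g ∘ ⇑σ) = σ⁻¹ := by
        symm
        rw [Tuple.eq_sort_iff]
        constructor
        · rw [show (g ∘ ⇑σ) ∘ ⇑σ⁻¹ = g from hcomp]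
          exact hg.monotone
        · intro i j hij he
          exfalso
          have : g i = g j := by
            have e1 : (g ∘ ⇑σ) (σ⁻¹ i) = g i := by
              show g (σ (σ⁻¹ i)) = g i
              rw [Equiv.Perm.inv_def, Equiv.apply_symm_apply]
            have e2 : (g ∘ ⇑σ) (σ⁻¹ j) = g j := by
              show g (σ (σ⁻¹ j)) = g j
              rw [Equiv.Perm.inv_def, Equiv.apply_symm_apply]
            rw [← e1, ← e2, he]
          exact (ne_of_lt hij) (hg.injective this)
      show ((g ∘ ⇑σ) ∘ ⇑(Tuple.sort (g ∘ ⇑σ)), (Tuple.sort (g ∘ ⇑σ))⁻¹) = (g, σ)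
      rw [hsort]
      rw [hcomp]
      rw [inv_inv]
    · intro φ hφ
      have : (φ ∘ ⇑(Tuple.sort φ)) ∘ ⇑(Tuple.sort φ)⁻¹ = φ := by
        funext x
        show φ ((Tuple.sort φ) (((Tuple.sort φ))⁻¹ x)) = φ x
        rw [Equiv.Perm.inv_def, Equiv.apply_symm_apply]
      show T φ = T ((φ ∘ ⇑(Tuple.sort φ)) ∘ ⇑(Tuple.sort φ)⁻¹)
      rw [this]
  rw [hbij, Finset.sum_product]
  refine Finset.sum_congr rfl fun g hg => ?_
  have hgs := mem_SM.mp hg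
  have hterm : ∀ σ : Equiv.Perm (Fin j), T (g ∘ ⇑σ)
      = ((∏ i, w (g i)) * (Z.submatrix g id).det)
          * (((Equiv.Perm.sign σ : ℤ) : ℝ) * ∏ a, X (g (σ a)) a) := by
    intro σ
    rw [hT]
    simp only []
    have hp1 : (∏ a, (X ((g ∘ ⇑σ) a) a * w ((g ∘ ⇑σ) a)))
        = (∏ a, X (g (σ a)) a) * ∏ i, w (g i) := by
      rw [Finset.prod_mul_distrib]
      congr 1
      exact Equiv.prod_comp σ (fun i => w (g i))
    have hp2 : (Z.submatrix (g ∘ ⇑σ) id).det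
        = ((Equiv.Perm.sign σ : ℤ) : ℝ) * (Z.submatrix g id).det := by
      have : Z.submatrix (g ∘ ⇑σ) id = (Z.submatrix g id).submatrix ⇑σ id := by
        rw [Matrix.submatrix_submatrix]
        rfl
      rw [this, Matrix.det_permute]
    rw [hp1, hp2]
    ring
  rw [Finset.sum_congr rfl (fun σ _ => hterm σ)]
  rw [← Finset.mul_sum]
  have hdetX : ∑ σ : Equiv.Perm (Fin j), ((Equiv.Perm.sign σ : ℤ) : ℝ) * ∏ a, X (g (σ a)) a
      = (X.submatrix g id).det := by
    rw [Matrix.det_apply]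
    refine Finset.sum_congr rfl fun σ _ => ?_
    rw [Units.smul_def, zsmul_eq_mul]
    rfl
  rw [hdetX]
  ring

lemma eig_compression_le {n r : ℕ} (hrn : r ≤ n) (lamF : Fin n → ℝ)
    (hmono : Antitone lamF)
    (C : Matrix (Fin n) (Fin r) ℝ) (hC : Cᵀ * C = 1)
    (hK : (Cᵀ * Matrix.diagonal lamF * C).IsHermitian)
    (σ : Equiv.Perm (Fin r)) (hsort : Antitone (hK.eigenvalues ∘ ⇑σ)) (k : Fin r) :
    hK.eigenvalues (σ k) ≤ lamF (Fin.castLE hrn k) := by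
  classical
  set K := Cᵀ * Matrix.diagonal lamF * C with hKdef
  set κ := hK.eigenvalues with hκ
  set k' := (k : ℕ) with hk'
  have hk'r : k' < r := k.2
  set ι : Fin (k'+1) → Fin r := fun i => ⟨i.1, lt_of_le_of_lt (Nat.lt_succ_iff.mp i.2) hk'r⟩
    with hι
  set em : Fin k' → Fin n := fun t => ⟨t.1, lt_of_lt_of_le (lt_trans t.2 hk'r) hrn⟩ with hem
  set v : Fin (k'+1) → (Fin r → ℝ) := fun i => ⇑(hK.eigenvectorBasis (σ (ι i))) with hv
  set P : Matrix (Fin k') (Fin (k'+1)) ℝ := fun t i => (C *ᵥ v i) (em t) with hP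
  -- a nonzero kernel vector
  have hninj : ¬ Function.Injective (Matrix.mulVecLin P) := by
    intro hinj
    have h1 := LinearMap.finrank_le_finrank_of_injective hinj
    rw [Module.finrank_fintype_fun_eq_card, Module.finrank_fintype_fun_eq_card] at h1
    simp at h1
  have hker : LinearMap.ker (Matrix.mulVecLin P) ≠ ⊥ := by
    intro h
    exact hninj (LinearMap.ker_eq_bot.mp h)
  obtain ⟨c, hcmem, hcne⟩ := (Submodule.ne_bot_iff _).mp hker
  have hPc : P *ᵥ c = 0 := hcmem
  set x : Fin r → ℝ := ∑ i, c i • v i with hx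
  -- orthonormality of the v's
  have hvv : ∀ i i', v i ⬝ᵥ v i' = if i = i' then 1 else 0 := by
    intro i i'
    have h1 := orthonormal_iff_ite.mp hK.eigenvectorBasis.orthonormal (σ (ι i)) (σ (ι i'))
    have h2 : (inner ℝ (hK.eigenvectorBasis (σ (ι i))) (hK.eigenvectorBasis (σ (ι i'))) : ℝ)
        = v i ⬝ᵥ v i' := by
      rw [PiLp.inner_apply]
      simp only [dotProduct, hv]
      refine Finset.sum_congr rfl fun p _ => ?_
      simp [mul_comm]
    rw [h2] at h1
    rw [h1]
    congr 1
    simp only [eq_iff_iff]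
    constructor
    · intro h
      have := σ.injective h
      have : (ι i).1 = (ι i').1 := congrArg Fin.val this
      exact Fin.ext this
    · intro h; rw [h]
  -- expansion of dot products
  have expand : ∀ u z : Fin (k'+1) → ℝ,
      (∑ i, u i • v i) ⬝ᵥ (∑ i, z i • v i) = ∑ i, u i * z i := by
    intro u z
    show ∑ p, (∑ i, u i • v i) p * (∑ i', z i' • v i') p = ∑ i, u i * z i
    have hterm : ∀ p, (∑ i, u i • v i) p * (∑ i', z i' • v i') p
        = ∑ i, ∑ i', (u i * z i') * (v i p * v i' p) := by
      intro p
      rw [Finset.sum_apply, Finset.sum_apply, Finset.sum_mul_sum]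
      refine Finset.sum_congr rfl fun i _ => Finset.sum_congr rfl fun i' _ => ?_
      simp only [Pi.smul_apply, smul_eq_mul]
      ring
    rw [Finset.sum_congr rfl (fun p _ => hterm p)]
    rw [Finset.sum_comm]
    refine Finset.sum_congr rfl fun i _ => ?_
    rw [Finset.sum_comm]
    have h3 : ∀ i', ∑ p, (u i * z i') * (v i p * v i' p)
        = (u i * z i') * (if i = i' then 1 else 0) := by
      intro i'
      rw [← Finset.mul_sum]
      congr 1
      exact hvv i i'
    rw [Finset.sum_congr rfl (fun i' _ => h3 i')]
    simp
  -- eigenvector equation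
  have hKv : ∀ i, K *ᵥ v i = κ (σ (ι i)) • v i := fun i => hK.mulVec_eigenvectorBasis (σ (ι i))
  have hKx : K *ᵥ x = ∑ i, (κ (σ (ι i)) * c i) • v i := by
    rw [hx]
    show K.mulVecLin (∑ i, c i • v i) = _
    rw [map_sum]
    refine Finset.sum_congr rfl fun i _ => ?_
    rw [LinearMap.map_smul]
    show c i • (K *ᵥ v i) = _
    rw [hKv i, smul_smul, mul_comm]
  have hxKx : x ⬝ᵥ (K *ᵥ x) = ∑ i, κ (σ (ι i)) * (c i)^2 := by
    rw [hKx, hx, expand c (fun i => κ (σ (ι i)) * c i)]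
    refine Finset.sum_congr rfl fun i _ => ?_
    ring
  have hxx : x ⬝ᵥ x = ∑ i, (c i)^2 := by
    rw [hx, expand c c]
    refine Finset.sum_congr rfl fun i _ => ?_
    ring
  -- lower bound
  have hlow : κ (σ k) * (∑ i, (c i)^2) ≤ x ⬝ᵥ (K *ᵥ x) := by
    rw [hxKx, Finset.mul_sum]
    refine Finset.sum_le_sum fun i _ => ?_
    refine mul_le_mul_of_nonneg_right ?_ (sq_nonneg _)
    refine hsort ?_
    show (ι i).1 ≤ k'
    exact Nat.lt_succ_iff.mp i.2
  -- coordinates of y vanish below k'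
  set y : Fin n → ℝ := C *ᵥ x with hy
  have hCx : y = ∑ i, c i • (C *ᵥ v i) := by
    rw [hy, hx]
    show C.mulVecLin (∑ i, c i • v i) = _
    rw [map_sum]
    refine Finset.sum_congr rfl fun i _ => ?_
    rw [LinearMap.map_smul]
    rfl
  have hy0 : ∀ t : Fin k', y (em t) = 0 := by
    intro t
    have h4 : y (em t) = (P *ᵥ c) t := by
      rw [hCx]
      rw [Finset.sum_apply]
      show ∑ i, (c i • (C *ᵥ v i)) (em t) = ∑ i, P t i * c i
      refine Finset.sum_congr rfl fun i _ => ?_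
      simp only [Pi.smul_apply, smul_eq_mul, hP]
      ring
    rw [h4, hPc]
    rfl
  -- transfer to diagonal quadratic form
  have hyDy : x ⬝ᵥ (K *ᵥ x) = y ⬝ᵥ (Matrix.diagonal lamF *ᵥ y) := by
    have hsplit2 : K *ᵥ x = Cᵀ *ᵥ (Matrix.diagonal lamF *ᵥ (C *ᵥ x)) := by
      rw [hKdef, ← Matrix.mulVec_mulVec, ← Matrix.mulVec_mulVec]
    rw [hsplit2, Matrix.dotProduct_mulVec, Matrix.vecMul_transpose]
  have hyy : y ⬝ᵥ y = x ⬝ᵥ x := by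
    have h5 : x ⬝ᵥ (Cᵀ *ᵥ (C *ᵥ x)) = y ⬝ᵥ y := by
      rw [Matrix.dotProduct_mulVec, Matrix.vecMul_transpose]
    rw [← h5, Matrix.mulVec_mulVec, hC, Matrix.one_mulVec]
  -- upper bound
  have hupp : y ⬝ᵥ (Matrix.diagonal lamF *ᵥ y) ≤ lamF (Fin.castLE hrn k) * (y ⬝ᵥ y) := by
    show ∑ t, y t * (Matrix.diagonal lamF *ᵥ y) t ≤ lamF (Fin.castLE hrn k) * ∑ t, y t * y t
    rw [Finset.mul_sum]
    refine Finset.sum_le_sum fun t _ => ?_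
    rw [Matrix.mulVec_diagonal]
    by_cases ht : t.1 < k'
    · have : y t = 0 := by
        have := hy0 ⟨t.1, ht⟩
        have hemt : em ⟨t.1, ht⟩ = t := Fin.ext rfl
        rwa [hemt] at this
      rw [this]
      simp
    · have hle : lamF t ≤ lamF (Fin.castLE hrn k) := by
        refine hmono ?_
        show k' ≤ t.1
        omega
      calc y t * (lamF t * y t) = lamF t * (y t * y t) := by ring
        _ ≤ lamF (Fin.castLE hrn k) * (y t * y t) :=
            mul_le_mul_of_nonneg_right hle (mul_self_nonneg _)
  -- positivity
  have hpos : 0 < ∑ i, (c i)^2 := by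
    obtain ⟨i0, hi0⟩ := Function.ne_iff.mp hcne
    refine Finset.sum_pos' (fun i _ => sq_nonneg _) ⟨i0, Finset.mem_univ _, ?_⟩
    exact lt_of_le_of_ne (sq_nonneg _) (Ne.symm (pow_ne_zero 2 hi0))
  -- conclude
  have hchain : κ (σ k) * (∑ i, (c i)^2) ≤ lamF (Fin.castLE hrn k) * (∑ i, (c i)^2) := by
    calc κ (σ k) * (∑ i, (c i)^2) ≤ x ⬝ᵥ (K *ᵥ x) := hlow
      _ = y ⬝ᵥ (Matrix.diagonal lamF *ᵥ y) := hyDy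
      _ ≤ lamF (Fin.castLE hrn k) * (y ⬝ᵥ y) := hupp
      _ = lamF (Fin.castLE hrn k) * (∑ i, (c i)^2) := by rw [hyy, hxx]
  exact le_of_mul_le_mul_right hchain hpos

lemma prod_image_eq {r j : ℕ} (κ : Fin r → ℝ) {g : Fin j → Fin r} (hg : StrictMono g) :
    ∏ x ∈ Finset.univ.image g, κ x = ∏ i, κ (g i) :=
  Finset.prod_image (fun a _ b _ h => hg.injective h)

/-- monotonicity of elementary symmetric sums under a sorted domination -/
lemma esymm_le {r j : ℕ} (κ μ : Fin r → ℝ) (σ : Equiv.Perm (Fin r))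
    (hdom : ∀ k, κ (σ k) ≤ μ k) (hnn : ∀ i, 0 ≤ κ i) :
    ∑ g ∈ SM j r, ∏ i, κ (g i) ≤ ∑ g ∈ SM j r, ∏ i, μ (g i) := by
  classical
  have h1 : ∑ g ∈ SM j r, ∏ i, κ (g i)
      = ∑ T ∈ Finset.powersetCard j (Finset.univ : Finset (Fin r)), ∏ x ∈ T, κ x := by
    rw [← sum_SM_eq_sum_powersetCard j (fun T => ∏ x ∈ T, κ x)]
    exact Finset.sum_congr rfl fun g hg => (prod_image_eq κ (mem_SM.mp hg)).symm
  have h2 : ∑ g ∈ SM j r, ∏ i, μ (g i)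
      = ∑ T ∈ Finset.powersetCard j (Finset.univ : Finset (Fin r)), ∏ x ∈ T, μ x := by
    rw [← sum_SM_eq_sum_powersetCard j (fun T => ∏ x ∈ T, μ x)]
    exact Finset.sum_congr rfl fun g hg => (prod_image_eq μ (mem_SM.mp hg)).symm
  rw [h1, h2]
  have h3 : ∑ T ∈ Finset.powersetCard j (Finset.univ : Finset (Fin r)), ∏ x ∈ T, κ x
      = ∑ T ∈ Finset.powersetCard j (Finset.univ : Finset (Fin r)), ∏ x ∈ T, κ (σ x) := by
    refine Finset.sum_nbij' (i := fun T => T.image ⇑σ.symm) (j := fun T => T.image ⇑σ)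
      ?_ ?_ ?_ ?_ ?_
    · intro T hT
      rw [Finset.mem_powersetCard] at hT ⊢
      exact ⟨Finset.subset_univ _, by rw [Finset.card_image_of_injective _ σ.symm.injective, hT.2]⟩
    · intro T hT
      rw [Finset.mem_powersetCard] at hT ⊢
      exact ⟨Finset.subset_univ _, by rw [Finset.card_image_of_injective _ σ.injective, hT.2]⟩
    · intro T _
      ext x
      simp
    · intro T _
      ext x
      simp
    · intro T _
      rw [Finset.prod_image (fun a _ b _ h => σ.symm.injective h)]
      refine Finset.prod_congr rfl fun x _ => ?_
      rw [Equiv.apply_symm_apply]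
  rw [h3]
  refine Finset.sum_le_sum fun T hT => ?_
  refine Finset.prod_le_prod (fun x _ => hnn (σ x)) (fun x _ => hdom x)

lemma compress_submatrix {n r j : ℕ} (w : Fin n → ℝ) (C : Matrix (Fin n) (Fin r) ℝ)
    (h : Fin j → Fin r) :
    (Cᵀ * Matrix.diagonal w * C).submatrix h h
      = (C.submatrix id h)ᵀ * Matrix.diagonal w * (C.submatrix id h) := by
  ext a b
  show (Cᵀ * Matrix.diagonal w * C) (h a) (h b) = _
  rw [Matrix.mul_apply, Matrix.mul_apply]
  refine Finset.sum_congr rfl fun k _ => ?_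
  rw [Matrix.mul_diagonal, Matrix.mul_diagonal]
  rfl

/-- the key quadratic-form bound -/
lemma Q_bound {n r j : ℕ} (hrn : r ≤ n) (lamF : Fin n → ℝ)
    (hmono : Antitone lamF) (hnn : ∀ i, 0 ≤ lamF i)
    (C : Matrix (Fin n) (Fin r) ℝ) (hC : Cᵀ * C = 1) :
    ∑ p ∈ (SM j n) ×ˢ (SM j r), (∏ i, lamF (p.1 i)) * ((C.submatrix p.1 p.2).det)^2
      ≤ ∑ h ∈ SM j r, ∏ i, lamF (Fin.castLE hrn (h i)) := by
  classical
  set K := Cᵀ * Matrix.diagonal lamF * C with hKdef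
  have hK : K.IsHermitian := by
    show Kᴴ = K
    rw [Matrix.conjTranspose_eq_transpose_of_trivial, hKdef, Matrix.transpose_mul,
      Matrix.transpose_mul, Matrix.diagonal_transpose, Matrix.transpose_transpose,
      Matrix.mul_assoc]
  set κ := hK.eigenvalues with hκ
  -- step 1: the LHS equals the sum of principal minors of K
  have step1 : ∑ p ∈ (SM j n) ×ˢ (SM j r), (∏ i, lamF (p.1 i)) * ((C.submatrix p.1 p.2).det)^2
      = ∑ h ∈ SM j r, (K.submatrix h h).det := by
    rw [Finset.sum_product_right]
    refine Finset.sum_congr rfl fun h _ => ?_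
    rw [hKdef, compress_submatrix, cauchy_binet]
    refine Finset.sum_congr rfl fun g _ => ?_
    have : (C.submatrix id h).submatrix g id = C.submatrix g h := rfl
    rw [this]
    ring
  -- step 2: positive semidefiniteness, eigenvalues nonneg
  have hPSD : K.PosSemidef := by
    have h1 := Matrix.posSemidef_conjTranspose_mul_self
      ((Matrix.diagonal fun i => Real.sqrt (lamF i)) * C)
    have h2 : ((Matrix.diagonal fun i => Real.sqrt (lamF i)) * C)ᴴ
        * ((Matrix.diagonal fun i => Real.sqrt (lamF i)) * C) = K := by
      rw [Matrix.conjTranspose_eq_transpose_of_trivial, Matrix.transpose_mul,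
        Matrix.diagonal_transpose, hKdef]
      rw [Matrix.mul_assoc, ← Matrix.mul_assoc (Matrix.diagonal fun i => Real.sqrt (lamF i)),
        Matrix.diagonal_mul_diagonal]
      have hfun : (fun i => Real.sqrt (lamF i) * Real.sqrt (lamF i)) = lamF :=
        funext fun i => Real.mul_self_sqrt (hnn i)
      rw [hfun, Matrix.mul_assoc]
    rwa [h2] at h1
  have hκnn : ∀ i, 0 ≤ κ i := fun i => hPSD.eigenvalues_nonneg i
  -- step 3: spectral theorem, sum of principal minors equals e_j of eigenvalues
  set O : Matrix (Fin r) (Fin r) ℝ := (hK.eigenvectorUnitary : Matrix (Fin r) (Fin r) ℝ)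
    with hO
  have hOrth : Oᵀ * O = 1 := by
    rw [← Matrix.conjTranspose_eq_transpose_of_trivial, ← Matrix.star_eq_conjTranspose]
    exact (Matrix.mem_unitaryGroup_iff').mp (hK.eigenvectorUnitary).2
  have hspec : K = Oᵀᵀ * Matrix.diagonal κ * Oᵀ := by
    have := hK.spectral_theorem
    rw [Matrix.transpose_transpose]
    calc K = (hK.eigenvectorUnitary : Matrix (Fin r) (Fin r) ℝ)
          * Matrix.diagonal (RCLike.ofReal ∘ κ)
          * (star (hK.eigenvectorUnitary : Matrix (Fin r) (Fin r) ℝ)) := this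
      _ = O * Matrix.diagonal κ * Oᵀ := by
          rw [RCLike.ofReal_real_eq_id, Function.id_comp]
          rw [Matrix.star_eq_conjTranspose, Matrix.conjTranspose_eq_transpose_of_trivial]
  have step3 : ∑ h ∈ SM j r, (K.submatrix h h).det = ∑ g ∈ SM j r, ∏ i, κ (g i) := by
    have hper : ∀ h ∈ SM j r, (K.submatrix h h).det
        = ∑ g ∈ SM j r, (∏ i, κ (g i)) * ((Oᵀ.submatrix id h).submatrix g id).det^2 := by
      intro h _
      calc (K.submatrix h h).det
          = ((Oᵀᵀ * Matrix.diagonal κ * Oᵀ).submatrix h h).det := by rw [← hspec]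
        _ = ((Oᵀ.submatrix id h)ᵀ * Matrix.diagonal κ * (Oᵀ.submatrix id h)).det := by
            rw [compress_submatrix]
        _ = ∑ g ∈ SM j r, (∏ i, κ (g i)) * ((Oᵀ.submatrix id h).submatrix g id).det^2 := by
            rw [cauchy_binet]
            refine Finset.sum_congr rfl fun g _ => ?_
            ring
    rw [Finset.sum_congr rfl hper]
    rw [Finset.sum_comm]
    refine Finset.sum_congr rfl fun g hg => ?_
    have hginj := (mem_SM.mp hg).injective
    have hone : ∀ h ∈ SM j r, ((Oᵀ.submatrix id h).submatrix g id).det^2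
        = ((O.submatrix id g).submatrix h id).det
          * ((O.submatrix id g).submatrix h id).det := by
      intro h _
      have e1 : (Oᵀ.submatrix id h).submatrix g id = Oᵀ.submatrix g h := rfl
      have e2 : Oᵀ.submatrix g h = (O.submatrix h g)ᵀ := by
        rw [Matrix.transpose_submatrix]
      have e3 : (O.submatrix h g) = (O.submatrix id g).submatrix h id := rfl
      rw [e1, e2, Matrix.det_transpose, e3]
      ring
    rw [← Finset.mul_sum, Finset.sum_congr rfl hone]
    have hcb := cauchy_binet (fun _ => (1:ℝ)) (O.submatrix id g) (O.submatrix id g)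
    have hsimp : ((O.submatrix id g)ᵀ * Matrix.diagonal (fun _ : Fin r => (1:ℝ))
        * (O.submatrix id g)) = (1 : Matrix (Fin j) (Fin j) ℝ) := by
      rw [Matrix.diagonal_one, Matrix.mul_one]
      ext a b
      rw [Matrix.mul_apply]
      have : ∀ k, (O.submatrix id g)ᵀ a k * (O.submatrix id g) k b = Oᵀ (g a) k * O k (g b) := by
        intro k; rfl
      rw [Finset.sum_congr rfl (fun k _ => this k)]
      rw [← Matrix.mul_apply, hOrth]
      by_cases hab : a = b
      · subst hab; simp [Matrix.one_apply]
      · rw [Matrix.one_apply_ne (fun hcon => hab (hginj hcon)), Matrix.one_apply_ne hab]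
    rw [hsimp, Matrix.det_one] at hcb
    simp only [Finset.prod_const_one, one_mul] at hcb
    rw [← hcb, mul_one]
  -- step 4: sorting and interlacing
  obtain ⟨σ, hsort⟩ : ∃ σ : Equiv.Perm (Fin r), Antitone (κ ∘ ⇑σ) := by
    refine ⟨Tuple.sort (fun i => -κ i), ?_⟩
    have := Tuple.monotone_sort (fun i => -κ i)
    intro a b hab
    have h2 := this hab
    simp only [Function.comp_apply] at h2 ⊢
    linarith
  have hdom : ∀ k : Fin r, κ (σ k) ≤ lamF (Fin.castLE hrn k) :=
    fun k => eig_compression_le hrn lamF hmono C hC hK σ hsort k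
  calc ∑ p ∈ (SM j n) ×ˢ (SM j r), (∏ i, lamF (p.1 i)) * ((C.submatrix p.1 p.2).det)^2
      = ∑ g ∈ SM j r, ∏ i, κ (g i) := by rw [step1, step3]
    _ ≤ ∑ g ∈ SM j r, ∏ i, lamF (Fin.castLE hrn (g i)) :=
        esymm_le κ (fun k => lamF (Fin.castLE hrn k)) σ hdom hκnn

lemma abs_add_abs_eq_max (a b : ℝ) : |a| + |b| = max |a + b| |a - b| := by
  have h1 : max |a + b| |a - b| ≤ |a| + |b| := by
    refine max_le (abs_add_le a b) ?_
    calc |a - b| = |a + -b| := by rw [sub_eq_add_neg]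
      _ ≤ |a| + |-b| := abs_add_le a (-b)
      _ = |a| + |b| := by rw [abs_neg]
  have h2 : |a| + |b| ≤ max |a + b| |a - b| := by
    rcases le_total 0 a with ha | ha <;> rcases le_total 0 b with hb | hb
    · refine le_max_of_le_left ?_
      rw [abs_of_nonneg ha, abs_of_nonneg hb, abs_of_nonneg (by linarith)]
    · refine le_max_of_le_right ?_
      rw [abs_of_nonneg ha, abs_of_nonpos hb, abs_of_nonneg (by linarith)]
      linarith
    · refine le_max_of_le_right ?_
      rw [abs_of_nonpos ha, abs_of_nonneg hb, abs_of_nonpos (by linarith : a - b ≤ 0)]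
      linarith
    · refine le_max_of_le_left ?_
      rw [abs_of_nonpos ha, abs_of_nonpos hb, abs_of_nonpos (by linarith)]
      linarith
  exact le_antisymm h2 h1

lemma main_aux {n r : ℕ} (hrn : r ≤ n) (hreven : Even r) (lamF : Fin n → ℝ)
    (hmono : Antitone lamF) (hnn : ∀ i, 0 ≤ lamF i) (hle1 : ∀ i, lamF i ≤ 1)
    (C E : Matrix (Fin n) (Fin r) ℝ) (hC : Cᵀ * C = 1) (hE : Eᵀ * E = 1) :
    |(Cᵀ * Matrix.diagonal lamF * E + 1).det| + |(Cᵀ * Matrix.diagonal lamF * E - 1).det|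
      ≤ (∏ k : Fin r, (1 + lamF (Fin.castLE hrn k)))
        + ∏ k : Fin r, (1 - lamF (Fin.castLE hrn k)) := by
  classical
  set μ : Fin r → ℝ := fun k => lamF (Fin.castLE hrn k) with hμ
  set Λ : ℕ → ℝ := fun j => ∑ h ∈ SM j r, ∏ i, μ (h i) with hΛ
  set G : Matrix (Fin n) (Fin n) ℝ := E * (Cᵀ * Matrix.diagonal lamF) with hG
  set s : ℕ → ℝ := fun j => ∑ g ∈ SM j n, ((G.submatrix g g)).det with hs
  -- identify the two determinants
  have hzp : (Cᵀ * Matrix.diagonal lamF * E + 1).det = (1 + G).det := by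
    rw [Matrix.det_mul_add_one_comm (Cᵀ * Matrix.diagonal lamF) E, add_comm, hG]
  have hzm : (Cᵀ * Matrix.diagonal lamF * E - 1).det = (1 - G).det := by
    have h1 : Cᵀ * Matrix.diagonal lamF * E - 1 = -(1 - Cᵀ * Matrix.diagonal lamF * E) := by
      rw [neg_sub]
    rw [h1, Matrix.det_neg, Fintype.card_fin, hreven.neg_one_pow, one_mul]
    rw [Matrix.det_one_sub_mul_comm (Cᵀ * Matrix.diagonal lamF) E, hG]
  -- expansions
  have hexp_p : (1 + G).det = ∑ j ∈ Finset.range (n+1), s j := det_one_add_expansion G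
  have hexp_m : (1 - G).det = ∑ j ∈ Finset.range (n+1), (-1:ℝ)^j * s j := by
    rw [sub_eq_add_neg, show -G = (-G) from rfl]
    rw [det_one_add_expansion (-G)]
    refine Finset.sum_congr rfl fun j _ => ?_
    rw [hs, Finset.mul_sum]
    refine Finset.sum_congr rfl fun g _ => ?_
    have hneg : (-G).submatrix g g = -(G.submatrix g g) := by ext a b; rfl
    rw [hneg, Matrix.det_neg, Fintype.card_fin]
  -- the per-degree bound
  have hΛnn : ∀ j, 0 ≤ Λ j := by
    intro j
    refine Finset.sum_nonneg fun h _ => Finset.prod_nonneg fun i _ => hnn _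
  have hsj : ∀ j, |s j| ≤ Λ j := by
    intro j
    -- rewrite s j as a double sum
    have hGsub : ∀ g : Fin j → Fin n, (G.submatrix g g).det
        = (∏ i, lamF (g i)) *
            ∑ h ∈ SM j r, ((E.submatrix g h).det * (C.submatrix g h).det) := by
      intro g
      have h1 : G.submatrix g g
          = (E.submatrix g id) * ((Cᵀ * Matrix.diagonal lamF).submatrix id g) := by
        rw [hG]
        exact Matrix.submatrix_mul E (Cᵀ * Matrix.diagonal lamF) g id g Function.bijective_id
      have h2 : (Cᵀ * Matrix.diagonal lamF).submatrix id g
          = (C.submatrix g id)ᵀ * Matrix.diagonal (fun i => lamF (g i)) := by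
        ext a b
        show (Cᵀ * Matrix.diagonal lamF) a (g b) = _
        rw [Matrix.mul_diagonal, Matrix.mul_diagonal]
        rfl
      have h3 : (E.submatrix g id) * (C.submatrix g id)ᵀ
          = ((E.submatrix g id)ᵀ)ᵀ * Matrix.diagonal (fun _ : Fin r => (1:ℝ))
              * (C.submatrix g id)ᵀ := by
        rw [Matrix.transpose_transpose, Matrix.diagonal_one, Matrix.mul_one]
      have h4 : ((E.submatrix g id) * (C.submatrix g id)ᵀ).det
          = ∑ h ∈ SM j r, ((E.submatrix g h).det * (C.submatrix g h).det) := by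
        rw [h3, cauchy_binet]
        refine Finset.sum_congr rfl fun h _ => ?_
        have e1 : (E.submatrix g id)ᵀ.submatrix h id = (E.submatrix g h)ᵀ := by
          rw [Matrix.transpose_submatrix]
          rfl
        have e2 : (C.submatrix g id)ᵀ.submatrix h id = (C.submatrix g h)ᵀ := by
          rw [Matrix.transpose_submatrix]
          rfl
        rw [e1, e2, Matrix.det_transpose, Matrix.det_transpose]
        simp
      rw [h1, h2, ← Matrix.mul_assoc, Matrix.det_mul, Matrix.det_diagonal, h4]
      ring
    have hsum : s j = ∑ p ∈ (SM j n) ×ˢ (SM j r),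
        (∏ i, lamF (p.1 i)) * ((E.submatrix p.1 p.2).det * (C.submatrix p.1 p.2).det) := by
      show ∑ g ∈ SM j n, (G.submatrix g g).det = _
      rw [Finset.sum_congr rfl (fun g _ => hGsub g)]
      rw [Finset.sum_product]
      exact Finset.sum_congr rfl fun g _ => Finset.mul_sum _ _ _
    have hCS := Finset.sum_sq_le_sum_mul_sum_of_sq_eq_mul ((SM j n) ×ˢ (SM j r))
      (r := fun p => (∏ i, lamF (p.1 i))
        * ((E.submatrix p.1 p.2).det * (C.submatrix p.1 p.2).det))
      (f := fun p => (∏ i, lamF (p.1 i)) * ((E.submatrix p.1 p.2).det)^2)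
      (g := fun p => (∏ i, lamF (p.1 i)) * ((C.submatrix p.1 p.2).det)^2)
      (fun p _ => mul_nonneg (Finset.prod_nonneg fun i _ => hnn _) (sq_nonneg _))
      (fun p _ => mul_nonneg (Finset.prod_nonneg fun i _ => hnn _) (sq_nonneg _))
      (fun p _ => by ring)
    have hQE := Q_bound (j := j) hrn lamF hmono hnn E hE
    have hQC := Q_bound (j := j) hrn lamF hmono hnn C hC
    have hQEnn : (0:ℝ) ≤ ∑ p ∈ (SM j n) ×ˢ (SM j r),
        (∏ i, lamF (p.1 i)) * ((E.submatrix p.1 p.2).det)^2 :=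
      Finset.sum_nonneg fun p _ =>
        mul_nonneg (Finset.prod_nonneg fun i _ => hnn _) (sq_nonneg _)
    have hsq : (s j)^2 ≤ Λ j * Λ j := by
      rw [hsum]
      calc (∑ p ∈ (SM j n) ×ˢ (SM j r), (∏ i, lamF (p.1 i))
            * ((E.submatrix p.1 p.2).det * (C.submatrix p.1 p.2).det))^2
          ≤ (∑ p ∈ (SM j n) ×ˢ (SM j r), (∏ i, lamF (p.1 i)) * ((E.submatrix p.1 p.2).det)^2)
            * (∑ p ∈ (SM j n) ×ˢ (SM j r), (∏ i, lamF (p.1 i))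
              * ((C.submatrix p.1 p.2).det)^2) := hCS
        _ ≤ Λ j * Λ j := by
            refine mul_le_mul hQE hQC ?_ (hΛnn j)
            exact Finset.sum_nonneg fun p _ =>
              mul_nonneg (Finset.prod_nonneg fun i _ => hnn _) (sq_nonneg _)
    nlinarith [sq_abs (s j), abs_nonneg (s j), hΛnn j]
  -- vanishing of high degrees
  have hΛ0 : ∀ j, r < j → Λ j = 0 := by
    intro j hj
    have hemp : SM j r = ∅ :=
      Finset.eq_empty_of_forall_notMem (fun g hg => absurd (SM_card_le hg) (by omega))
    rw [hΛ]
    simp [hemp]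
  -- powerset decomposition helper
  have hdecomp : ∀ F : Finset (Fin r) → ℝ,
      ∑ T ∈ (Finset.univ : Finset (Finset (Fin r))), F T
        = ∑ j ∈ Finset.range (r+1), ∑ T ∈ Finset.powersetCard j Finset.univ, F T := by
    intro F
    have hmap : ∀ T ∈ (Finset.univ : Finset (Finset (Fin r))), T.card ∈ Finset.range (r+1) := by
      intro T _
      rw [Finset.mem_range]
      exact Nat.lt_succ_of_le (by simpa using Finset.card_le_card (Finset.subset_univ T))
    rw [← Finset.sum_fiberwise_of_maps_to hmap F]
    refine Finset.sum_congr rfl fun j _ => ?_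
    congr 1
    rw [Finset.powersetCard_eq_filter, Finset.powerset_univ]
  -- the two product expansions
  have hplus : ∏ k : Fin r, (1 + μ k) = ∑ j ∈ Finset.range (r+1), Λ j := by
    have h1 : ∏ k : Fin r, (1 + μ k) = ∏ k : Fin r, (μ k + 1) :=
      Finset.prod_congr rfl fun k _ => add_comm _ _
    rw [h1, Finset.prod_add]
    have h2 : ∀ t ∈ (Finset.univ : Finset (Fin r)).powerset,
        (∏ i ∈ t, μ i) * (∏ i ∈ Finset.univ \ t, (1:ℝ)) = ∏ i ∈ t, μ i := by
      intro t _
      rw [Finset.prod_const_one, mul_one]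
    rw [Finset.sum_congr rfl h2, Finset.powerset_univ, hdecomp (fun T => ∏ i ∈ T, μ i)]
    refine Finset.sum_congr rfl fun j _ => ?_
    rw [hΛ, ← sum_SM_eq_sum_powersetCard j (fun T => ∏ i ∈ T, μ i)]
    exact Finset.sum_congr rfl fun g hg => prod_image_eq μ (mem_SM.mp hg)
  have hminus : ∏ k : Fin r, (1 - μ k) = ∑ j ∈ Finset.range (r+1), (-1:ℝ)^j * Λ j := by
    have h1 : ∏ k : Fin r, (1 - μ k) = ∏ k : Fin r, ((-μ k) + 1) :=
      Finset.prod_congr rfl fun k _ => by ring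
    rw [h1, Finset.prod_add]
    have h2 : ∀ t ∈ (Finset.univ : Finset (Fin r)).powerset,
        (∏ i ∈ t, (-μ i)) * (∏ i ∈ Finset.univ \ t, (1:ℝ))
          = (-1:ℝ)^t.card * ∏ i ∈ t, μ i := by
      intro t _
      rw [Finset.prod_const_one, mul_one]
      calc ∏ i ∈ t, (-μ i) = ∏ i ∈ t, ((-1:ℝ) * μ i) :=
            Finset.prod_congr rfl fun i _ => by ring
        _ = (∏ i ∈ t, (-1:ℝ)) * ∏ i ∈ t, μ i := Finset.prod_mul_distrib
        _ = (-1:ℝ)^t.card * ∏ i ∈ t, μ i := by rw [Finset.prod_const]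
    rw [Finset.sum_congr rfl h2, Finset.powerset_univ,
      hdecomp (fun T => (-1:ℝ)^T.card * ∏ i ∈ T, μ i)]
    refine Finset.sum_congr rfl fun j _ => ?_
    have h3 : ∀ T ∈ Finset.powersetCard j (Finset.univ : Finset (Fin r)),
        (-1:ℝ)^T.card * ∏ i ∈ T, μ i = (-1:ℝ)^j * ∏ i ∈ T, μ i := by
      intro T hT
      rw [(Finset.mem_powersetCard.mp hT).2]
    rw [Finset.sum_congr rfl h3, ← Finset.mul_sum]
    congr 1
    rw [hΛ, ← sum_SM_eq_sum_powersetCard j (fun T => ∏ i ∈ T, μ i)]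
    exact Finset.sum_congr rfl fun g hg => prod_image_eq μ (mem_SM.mp hg)
  have hmnn : 0 ≤ ∏ k : Fin r, (1 - μ k) :=
    Finset.prod_nonneg fun k _ => by
      have := hle1 (Fin.castLE hrn k)
      rw [hμ]
      linarith
  -- the two key bounds
  have hsum_ext : ∀ c : ℝ, ∑ j ∈ Finset.range (n+1), (1 + c * (-1:ℝ)^j) * Λ j
      = ∑ j ∈ Finset.range (r+1), (1 + c * (-1:ℝ)^j) * Λ j := by
    intro c
    symm
    refine Finset.sum_subset (Finset.range_subset_range.mpr (by omega)) ?_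
    intro j hj hnot
    rw [hΛ0 j ?_, mul_zero]
    rw [Finset.mem_range] at hj
    rw [Finset.mem_range] at hnot
    omega
  have key : ∀ c : ℝ, |c| = 1 →
      |(1 + G).det + c * (1 - G).det|
        ≤ (∏ k : Fin r, (1 + μ k)) + c * ∏ k : Fin r, (1 - μ k) := by
    intro c hc
    have habs1 : ∀ j : ℕ, |1 + c * (-1:ℝ)^j| = 1 + c * (-1:ℝ)^j := by
      intro j
      refine abs_of_nonneg ?_
      have h2 := abs_le.mp (le_of_eq hc)
      rcases Nat.even_or_odd j with h | h
      · rw [h.neg_one_pow]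
        linarith [h2.1]
      · rw [h.neg_one_pow]
        linarith [h2.2]
    calc |(1 + G).det + c * (1 - G).det|
        = |∑ j ∈ Finset.range (n+1), (1 + c * (-1:ℝ)^j) * s j| := by
          rw [hexp_p, hexp_m, Finset.mul_sum, ← Finset.sum_add_distrib]
          congr 1
          refine Finset.sum_congr rfl fun j _ => ?_
          ring
      _ ≤ ∑ j ∈ Finset.range (n+1), |(1 + c * (-1:ℝ)^j) * s j| :=
          Finset.abs_sum_le_sum_abs _ _
      _ ≤ ∑ j ∈ Finset.range (n+1), (1 + c * (-1:ℝ)^j) * Λ j := by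
          refine Finset.sum_le_sum fun j _ => ?_
          rw [abs_mul, habs1 j]
          refine mul_le_mul_of_nonneg_left (hsj j) ?_
          rw [← habs1 j]
          exact abs_nonneg _
      _ = ∑ j ∈ Finset.range (r+1), (1 + c * (-1:ℝ)^j) * Λ j := hsum_ext c
      _ = (∑ j ∈ Finset.range (r+1), Λ j)
            + c * ∑ j ∈ Finset.range (r+1), (-1:ℝ)^j * Λ j := by
          rw [Finset.mul_sum, ← Finset.sum_add_distrib]
          refine Finset.sum_congr rfl fun j _ => ?_
          ring
      _ = (∏ k : Fin r, (1 + μ k)) + c * ∏ k : Fin r, (1 - μ k) := by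
          rw [hplus, hminus]
  have key1 := key 1 (by norm_num)
  have key2 := key (-1) (by norm_num)
  rw [hzp, hzm, abs_add_abs_eq_max]
  refine max_le ?_ ?_
  · calc |(1 + G).det + (1 - G).det|
        = |(1 + G).det + 1 * (1 - G).det| := by congr 1; ring
      _ ≤ (∏ k : Fin r, (1 + μ k)) + 1 * ∏ k : Fin r, (1 - μ k) := key1
      _ = (∏ k : Fin r, (1 + μ k)) + ∏ k : Fin r, (1 - μ k) := by ring
  · calc |(1 + G).det - (1 - G).det|
        = |(1 + G).det + (-1) * (1 - G).det| := by congr 1; ring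
      _ ≤ (∏ k : Fin r, (1 + μ k)) + (-1) * ∏ k : Fin r, (1 - μ k) := key2
      _ ≤ (∏ k : Fin r, (1 + μ k)) + ∏ k : Fin r, (1 - μ k) := by linarith

lemma orth_mul {n r : ℕ} (M : Matrix (Fin n) (Fin n) ℝ) (A : Matrix (Fin n) (Fin r) ℝ)
    (hM : M * Mᵀ = 1) (hA : Aᵀ * A = 1) : (Mᵀ * A)ᵀ * (Mᵀ * A) = 1 := by
  rw [Matrix.transpose_mul, Matrix.transpose_transpose]
  rw [Matrix.mul_assoc]
  rw [← Matrix.mul_assoc M Mᵀ A, hM, Matrix.one_mul, hA]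


end CompressionAux

open CompressionAux

/-- Optimality bound for the distillation protocol: if `Y` is a `2L × 2L` real
matrix whose singular values `lam 0 ≥ lam 1 ≥ …` (encoded via an SVD
`Y = U * diagonal lam * Wᵀ`) all lie in `[0,1]`, then for every `2 ≤ m ≤ L`,
all `2L × 2m` real matrices `A`, `B` with orthonormal columns and every
`2m × 2m` real orthogonal `V`,
`|det (Aᵀ Y B + V)| + |det (Aᵀ Y B − V)| ≤ ∏_{k<2m} (1+lam k) + ∏_{k<2m} (1−lam k)`. -/
theorem compression_det_sum_bound
    (L m : ℕ) (hm : 2 ≤ m) (hmL : m ≤ L) (lam : ℕ → ℝ)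
    (hmono : ∀ i j, i ≤ j → j < 2 * L → lam j ≤ lam i)
    (hnonneg : ∀ k < 2 * L, 0 ≤ lam k)
    (hle : ∀ k < 2 * L, lam k ≤ 1)
    (Y U W : Matrix (Fin (2 * L)) (Fin (2 * L)) ℝ)
    (hU : Uᵀ * U = 1) (hW : Wᵀ * W = 1)
    (hsvd : Y = U * Matrix.diagonal (fun k : Fin (2 * L) => lam (k : ℕ)) * Wᵀ)
    (A B : Matrix (Fin (2 * L)) (Fin (2 * m)) ℝ)
    (hA : Aᵀ * A = 1) (hB : Bᵀ * B = 1)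
    (V : Matrix (Fin (2 * m)) (Fin (2 * m)) ℝ) (hV : Vᵀ * V = 1) :
    |(Aᵀ * Y * B + V).det| + |(Aᵀ * Y * B - V).det|
      ≤ ∏ k ∈ Finset.range (2 * m), (1 + lam k)
        + ∏ k ∈ Finset.range (2 * m), (1 - lam k) := by
  classical
  have hrn : 2 * m ≤ 2 * L := by omega
  set lamF : Fin (2 * L) → ℝ := fun k => lam (k : ℕ) with hlamF
  have hmonoF : Antitone lamF := fun a b hab => hmono a b hab b.2
  have hnnF : ∀ i, 0 ≤ lamF i := fun i => hnonneg i i.2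
  have hle1F : ∀ i, lamF i ≤ 1 := fun i => hle i i.2
  have hUU : U * Uᵀ = 1 := mul_eq_one_comm.mp hU
  have hWW : W * Wᵀ = 1 := mul_eq_one_comm.mp hW
  have hVV : V * Vᵀ = 1 := mul_eq_one_comm.mp hV
  have hAV : (A * V)ᵀ * (A * V) = 1 := by
    rw [Matrix.transpose_mul, Matrix.mul_assoc, ← Matrix.mul_assoc Aᵀ A V, hA,
      Matrix.one_mul, hV]
  set C := Uᵀ * (A * V) with hCdef
  set E := Wᵀ * B with hEdef
  have hCorth : Cᵀ * C = 1 := orth_mul U (A * V) hUU hAV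
  have hEorth : Eᵀ * E = 1 := orth_mul W B hWW hB
  have hN : Cᵀ * Matrix.diagonal lamF * E = Vᵀ * (Aᵀ * Y * B) := by
    rw [hCdef, hEdef, hsvd]
    rw [Matrix.transpose_mul, Matrix.transpose_transpose, Matrix.transpose_mul]
    simp only [Matrix.mul_assoc]
  have hplus : Aᵀ * Y * B + V = V * (Cᵀ * Matrix.diagonal lamF * E + 1) := by
    rw [Matrix.mul_add, Matrix.mul_one, hN, ← Matrix.mul_assoc, hVV, Matrix.one_mul]
  have hminusM : Aᵀ * Y * B - V = V * (Cᵀ * Matrix.diagonal lamF * E - 1) := by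
    rw [Matrix.mul_sub, Matrix.mul_one, hN, ← Matrix.mul_assoc, hVV, Matrix.one_mul]
  have hdetV : |V.det| = 1 := by
    have h1 : V.det * V.det = 1 := by
      calc V.det * V.det = (Vᵀ).det * V.det := by rw [Matrix.det_transpose]
        _ = (Vᵀ * V).det := (Matrix.det_mul _ _).symm
        _ = 1 := by rw [hV, Matrix.det_one]
    rcases mul_self_eq_one_iff.mp h1 with h | h <;> rw [h] <;> norm_num
  have hfinal := main_aux hrn (even_two_mul m) lamF hmonoF hnnF hle1F C E hCorth hEorth
  calc |(Aᵀ * Y * B + V).det| + |(Aᵀ * Y * B - V).det|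
      = |V.det| * |(Cᵀ * Matrix.diagonal lamF * E + 1).det|
        + |V.det| * |(Cᵀ * Matrix.diagonal lamF * E - 1).det| := by
        rw [hplus, hminusM, Matrix.det_mul, Matrix.det_mul, abs_mul, abs_mul]
    _ = |(Cᵀ * Matrix.diagonal lamF * E + 1).det|
        + |(Cᵀ * Matrix.diagonal lamF * E - 1).det| := by rw [hdetV, one_mul, one_mul]
    _ ≤ (∏ k : Fin (2 * m), (1 + lamF (Fin.castLE hrn k)))
        + ∏ k : Fin (2 * m), (1 - lamF (Fin.castLE hrn k)) := hfinal
    _ = ∏ k ∈ Finset.range (2 * m), (1 + lam k)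
        + ∏ k ∈ Finset.range (2 * m), (1 - lam k) := by
        congr 1
        · rw [← Fin.prod_univ_eq_prod_range (fun k => 1 + lam k) (2 * m)]
          exact Finset.prod_congr rfl fun k _ => rfl
        · rw [← Fin.prod_univ_eq_prod_range (fun k => 1 - lam k) (2 * m)]
          exact Finset.prod_congr rfl fun k _ => rfl
end

section
/- Let a, b, c, d ∈ ℝ and let S be the 4×4 complex matrix S = (1/2)·[[1, ia, ic, 0], [−ia, 1, 0, id], [−ic, 0, 1, ib], [0, −id, −ib, 1]]. Then S is Hermitian, and the two conditions S ⪰ 0 and 1 − S ⪰ 0 (i.e. 0 ≤ S ≤ 1 in the operator order) hold if and only if a² + b² + c² + d² ≤ 2 and a² + b² + c² + d² ≤ 1 + (ab − cd)². -/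
open Matrix ComplexOrder

lemma psd_det_nonneg' {n : Type*} [Fintype n] [DecidableEq n] {M : Matrix n n ℂ}
    (hM : M.PosSemidef) : 0 ≤ M.det := by
  rw [hM.1.det_eq_prod_eigenvalues]
  norm_cast
  rw [RCLike.ofReal_nonneg]
  exact Finset.prod_nonneg fun i _ => hM.eigenvalues_nonneg i

lemma key2' (α β m s t : ℝ) (h1 : 0 ≤ α + β) (h2 : m ^ 2 ≤ α * β) :
    2 * m * s * t ≤ α * s ^ 2 + β * t ^ 2 := by
  have hα : 0 ≤ α := by nlinarith [sq_nonneg m]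
  have hβ : 0 ≤ β := by nlinarith [sq_nonneg m]
  set p := Real.sqrt α with hpdef
  set q := Real.sqrt β with hqdef
  have hp : p ^ 2 = α := Real.sq_sqrt hα
  have hq : q ^ 2 = β := Real.sq_sqrt hβ
  have hpq : 0 ≤ p * q := mul_nonneg (Real.sqrt_nonneg _) (Real.sqrt_nonneg _)
  have hm1 : m ≤ p * q := by nlinarith [sq_nonneg (m - p*q)]
  have hm2 : -(p * q) ≤ m := by nlinarith [sq_nonneg (m + p*q)]
  have ha1 : s * t ≤ |s| * |t| := by rw [← abs_mul]; exact le_abs_self _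
  have ha2 : -(|s| * |t|) ≤ s * t := by rw [← abs_mul]; exact neg_abs_le _
  nlinarith [sq_nonneg (p * |s| - q * |t|), sq_abs s, sq_abs t,
    mul_nonneg (sub_nonneg.mpr hm1) (by linarith : (0:ℝ) ≤ |s| * |t| + s * t),
    mul_nonneg (by linarith : (0:ℝ) ≤ p * q + m) (by linarith : (0:ℝ) ≤ |s| * |t| - s * t)]

lemma det_fin_four'' {R : Type*} [CommRing R] (A : Matrix (Fin 4) (Fin 4) R) :
    A.det =
      A 0 0 * (A 1 1 * A 2 2 * A 3 3 - A 1 1 * A 2 3 * A 3 2 - A 1 2 * A 2 1 * A 3 3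
        + A 1 2 * A 2 3 * A 3 1 + A 1 3 * A 2 1 * A 3 2 - A 1 3 * A 2 2 * A 3 1)
      - A 0 1 * (A 1 0 * A 2 2 * A 3 3 - A 1 0 * A 2 3 * A 3 2 - A 1 2 * A 2 0 * A 3 3
        + A 1 2 * A 2 3 * A 3 0 + A 1 3 * A 2 0 * A 3 2 - A 1 3 * A 2 2 * A 3 0)
      + A 0 2 * (A 1 0 * A 2 1 * A 3 3 - A 1 0 * A 2 3 * A 3 1 - A 1 1 * A 2 0 * A 3 3
        + A 1 1 * A 2 3 * A 3 0 + A 1 3 * A 2 0 * A 3 1 - A 1 3 * A 2 1 * A 3 0)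
      - A 0 3 * (A 1 0 * A 2 1 * A 3 2 - A 1 0 * A 2 2 * A 3 1 - A 1 1 * A 2 0 * A 3 2
        + A 1 1 * A 2 2 * A 3 0 + A 1 2 * A 2 0 * A 3 1 - A 1 2 * A 2 1 * A 3 0) := by
  rw [Matrix.det_succ_row_zero, Fin.sum_univ_four]
  simp [Matrix.det_fin_three, Fin.sum_univ_succ, Matrix.submatrix_apply, Fin.succAbove,
    Fin.lt_def, Fin.ext_iff, show ((2:Fin 3).succ : Fin 4) = 3 from rfl,
    show ((1:Fin 3).succ : Fin 4) = 2 from rfl, show ((0:Fin 3).succ : Fin 4) = 1 from rfl,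
    show ((3:Fin 4) : ℕ) = 3 from rfl, show (Fin.castSucc (2: Fin 3) : Fin 4) = 2 from rfl,
    show (Fin.castSucc (1: Fin 3) : Fin 4) = 1 from rfl]
  ring

set_option maxHeartbeats 4000000 in
/-- The general two-mode quasifree covariance matrix
`S = (1/2)·[[1, ia, ic, 0], [−ia, 1, 0, id], [−ic, 0, 1, ib], [0, −id, −ib, 1]]`
is Hermitian, and `0 ≤ S ≤ 1` (i.e. `S ⪰ 0` and `1 − S ⪰ 0`) holds if and only
if `a² + b² + c² + d² ≤ 2` and `a² + b² + c² + d² ≤ 1 + (ab − cd)²`. -/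
theorem two_mode_covariance_positivity
    (a b c d : ℝ) (S : Matrix (Fin 4) (Fin 4) ℂ)
    (hS : S = (1 / 2 : ℂ) •
      !![1, (a : ℂ) * Complex.I, (c : ℂ) * Complex.I, 0;
         -((a : ℂ) * Complex.I), 1, 0, (d : ℂ) * Complex.I;
         -((c : ℂ) * Complex.I), 0, 1, (b : ℂ) * Complex.I;
         0, -((d : ℂ) * Complex.I), -((b : ℂ) * Complex.I), 1]) :
    S.IsHermitian ∧
      ((S.PosSemidef ∧ (1 - S).PosSemidef) ↔
        (a ^ 2 + b ^ 2 + c ^ 2 + d ^ 2 ≤ 2 ∧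
          a ^ 2 + b ^ 2 + c ^ 2 + d ^ 2 ≤ 1 + (a * b - c * d) ^ 2)) := by
  -- quadratic form formula
  have hq : ∀ x : Fin 4 → ℂ, star x ⬝ᵥ S *ᵥ x = (1/2 : ℂ) *
      ((starRingEnd ℂ) (x 0) * (x 0 + (a : ℂ) * Complex.I * x 1 + (c : ℂ) * Complex.I * x 2)
      + (starRingEnd ℂ) (x 1) * (-((a : ℂ) * Complex.I) * x 0 + x 1 + (d : ℂ) * Complex.I * x 3)
      + (starRingEnd ℂ) (x 2) * (-((c : ℂ) * Complex.I) * x 0 + x 2 + (b : ℂ) * Complex.I * x 3)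
      + (starRingEnd ℂ) (x 3) * (-((d : ℂ) * Complex.I) * x 1 - (b : ℂ) * Complex.I * x 2 + x 3)) := by
    intro x
    subst hS
    simp [Matrix.mulVec, dotProduct, Fin.sum_univ_four, Matrix.cons_val_zero,
      Matrix.cons_val_one, Matrix.head_cons, Matrix.cons_val_two, Matrix.tail_cons,
      Matrix.cons_val_three, Matrix.vecHead, Matrix.vecTail, Matrix.of_apply]
    ring
  have hherm : S.IsHermitian := by
    subst hS
    show _ᴴ = _
    ext i j
    fin_cases i <;> fin_cases j <;>
      simp [Matrix.conjTranspose_apply, Complex.ext_iff] <;> ring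
  have htr : 1 - S = Sᵀ := by
    subst hS
    ext i j
    fin_cases i <;> fin_cases j <;>
      simp [Matrix.one_apply, Matrix.sub_apply, Matrix.transpose_apply, Complex.ext_iff] <;>
      ring
  refine ⟨hherm, ?_, ?_⟩
  · -- forward direction
    rintro ⟨hpos, -⟩
    constructor
    · -- a²+b²+c²+d² ≤ 2 via two test vectors
      have h1 := hpos.dotProduct_mulVec_nonneg ![1, (a:ℂ) * Complex.I, (c:ℂ) * Complex.I, 0]
      have h2 := hpos.dotProduct_mulVec_nonneg ![0, -((d:ℂ) * Complex.I), -((b:ℂ) * Complex.I), 1]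
      rw [hq, Complex.le_def] at h1 h2
      simp [Complex.ext_iff, Complex.add_re, Complex.mul_re, Complex.mul_im,
        Complex.add_im, Complex.div_re, Complex.div_im] at h1 h2
      nlinarith [h1, h2]
    · -- a²+b²+c²+d² ≤ 1 + (ab−cd)² via determinant
      have hd := psd_det_nonneg' hpos
      have hdet : S.det = (((1 - (a^2+b^2+c^2+d^2) + (a*b-c*d)^2)/16 : ℝ) : ℂ) := by
        subst hS
        rw [det_fin_four'']
        simp [Matrix.cons_val_zero, Matrix.cons_val_one, Matrix.head_cons,
          Matrix.cons_val_two, Matrix.tail_cons, Matrix.cons_val_three,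
          Matrix.vecHead, Matrix.vecTail, Complex.ext_iff]
        constructor <;> (norm_cast; push_cast; ring)
      rw [hdet, Complex.zero_le_real] at hd
      linarith
  · -- backward direction
    rintro ⟨h1, h2⟩
    have hpos : S.PosSemidef := by
      refine .of_dotProduct_mulVec_nonneg hherm fun x => ?_
      rw [hq, Complex.le_def]
      set u0 := (x 0).re; set v0 := (x 0).im
      set u1 := (x 1).re; set v1 := (x 1).im
      set u2 := (x 2).re; set v2 := (x 2).im
      set u3 := (x 3).re; set v3 := (x 3).im
      have HB1 : 2 * (-(a*d+b*c)) * v0 * v3 ≤ (1 - a^2 - c^2) * v0^2 + (1 - b^2 - d^2) * v3^2 := by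
        apply key2' <;> nlinarith [sq_nonneg (a*b - c*d)]
      have HB2 : 2 * (a*c+b*d) * v1 * v2 ≤ (1 - a^2 - d^2) * v1^2 + (1 - b^2 - c^2) * v2^2 := by
        apply key2' <;> nlinarith [sq_nonneg (a*b - c*d)]
      constructor
      · simp only [Complex.add_re, Complex.mul_re, Complex.mul_im, Complex.add_im,
          Complex.sub_re, Complex.sub_im, Complex.neg_re, Complex.neg_im,
          Complex.I_re, Complex.I_im, Complex.ofReal_re, Complex.ofReal_im,
          Complex.conj_re, Complex.conj_im, Complex.one_re, Complex.one_im,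
          Complex.zero_re, Complex.zero_im, Complex.div_re, Complex.div_im,
          Complex.normSq_ofNat, Complex.re_ofNat, Complex.im_ofNat]
        nlinarith [sq_nonneg (u0 - (a*v1 + c*v2)), sq_nonneg (u1 + a*v0 - d*v3),
          sq_nonneg (u2 + c*v0 - b*v3), sq_nonneg (u3 + d*v1 + b*v2), HB1, HB2]
      · simp only [Complex.add_re, Complex.mul_re, Complex.mul_im, Complex.add_im,
          Complex.sub_re, Complex.sub_im, Complex.neg_re, Complex.neg_im,
          Complex.I_re, Complex.I_im, Complex.ofReal_re, Complex.ofReal_im,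
          Complex.conj_re, Complex.conj_im, Complex.one_re, Complex.one_im,
          Complex.zero_re, Complex.zero_im, Complex.div_re, Complex.div_im,
          Complex.normSq_ofNat, Complex.re_ofNat, Complex.im_ofNat]
        ring
    exact ⟨hpos, htr ▸ hpos.transpose⟩
end

section
/- Let n ≥ 1, let λ_1, …, λ_n ∈ (0,1], and let V be an n×n real orthogonal matrix. Writing Λ = diag(λ_1,…,λ_n), suppose det(Λ + V) and det(Λ − V) have the same sign (both are assumed nonzero). Then |det(Λ + V)| + |det(Λ − V)| = 2·|Σ_{S ⊆ {1,…,n}, |S| even} (∏_{j∈S} λ_j) det(V_S)|, where V_S is the submatrix of V obtained by deleting rows and columns indexed by S; and consequently |det(Λ + V)| + |det(Λ − V)| ≤ 2·Σ_{S ⊆ {1,…,n}, |S| even} ∏_{j∈S} λ_j = ∏_{j=1}^{n}(1+λ_j) + ∏_{j=1}^{n}(1−λ_j). -/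
open Matrix Finset

lemma det_diag_add {n : ℕ} (d : Fin n → ℝ) (A : Matrix (Fin n) (Fin n) ℝ) :
    (Matrix.diagonal d + A).det
      = ∑ S : Finset (Fin n), (∏ j ∈ S, d j) *
          (A.submatrix (fun i : ↥(Sᶜ) => (i : Fin n)) (fun i : ↥(Sᶜ) => (i : Fin n))).det := by
  have h0 : (Matrix.diagonal d + A).det
      = ∑ S : Finset (Fin n),
          (Matrix.detRowAlternating (S.piecewise (Matrix.diagonal d) A) : ℝ) := by
    exact (Matrix.detRowAlternating.toMultilinearMap.map_add_univ (Matrix.diagonal d) A)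
  rw [h0]
  refine Finset.sum_congr rfl fun S _ => ?_
  classical
  -- rewrite piecewise as scaled identity rows
  set m : Fin n → (Fin n → ℝ) := S.piecewise (fun i => (1 : Matrix (Fin n) (Fin n) ℝ) i) A with hm
  have hpw : S.piecewise (Matrix.diagonal d) A = S.piecewise (fun i => d i • m i) m := by
    funext i
    by_cases hi : i ∈ S
    · simp only [Finset.piecewise, hi, if_true, hm]
      funext j
      simp [Matrix.diagonal_apply, Matrix.one_apply, mul_ite]
    · simp [Finset.piecewise, hi, hm]
  have hsm : (Matrix.detRowAlternating (S.piecewise (fun i => d i • m i) m) : ℝ)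
      = (∏ j ∈ S, d j) • (Matrix.detRowAlternating m : ℝ) :=
    Matrix.detRowAlternating.toMultilinearMap.map_piecewise_smul d m S
  rw [hpw, hsm]
  have hdet : (Matrix.detRowAlternating m : ℝ)
      = (A.submatrix (fun i : ↥(Sᶜ) => (i : Fin n)) (fun i : ↥(Sᶜ) => (i : Fin n))).det := by
    have : (Matrix.detRowAlternating m : ℝ) = (Matrix.of m).det := rfl
    rw [this]
    rw [← Matrix.det_submatrix_equiv_self (Equiv.sumCompl (· ∈ S)) (Matrix.of m)]
    have hblock : (Matrix.of m).submatrix (Equiv.sumCompl (· ∈ S)) (Equiv.sumCompl (· ∈ S))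
        = Matrix.fromBlocks 1 0
            (A.submatrix (fun i : {x // ¬ x ∈ S} => (i : Fin n)) (fun i : ↥S => (i : Fin n)))
            (A.submatrix (fun i : {x // ¬ x ∈ S} => (i : Fin n))
              (fun i : {x // ¬ x ∈ S} => (i : Fin n))) := by
      ext i j
      cases i with
      | inl i =>
        cases j with
        | inl j =>
          simp [hm, Finset.piecewise, i.2, Matrix.one_apply, Subtype.val_inj]
        | inr j =>
          have hij : (i : Fin n) ≠ (j : Fin n) := fun h => j.2 (h ▸ i.2)
          simp [hm, Finset.piecewise, i.2, Matrix.one_apply, hij]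
      | inr i =>
        cases j with
        | inl j => simp [hm, Finset.piecewise, i.2]
        | inr j => simp [hm, Finset.piecewise, i.2]
    rw [hblock, Matrix.det_fromBlocks_zero₁₂, Matrix.det_one, one_mul]
    let e2 : {x : Fin n // ¬ x ∈ S} ≃ ↥(Sᶜ) :=
      { toFun := fun x => ⟨x.1, Finset.mem_compl.2 x.2⟩
        invFun := fun x => ⟨x.1, Finset.mem_compl.1 x.2⟩
        left_inv := fun _ => rfl
        right_inv := fun _ => rfl }
    have hAB : (A.submatrix (fun i : {x // ¬ x ∈ S} => (i : Fin n))
          (fun i : {x // ¬ x ∈ S} => (i : Fin n)))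
        = (A.submatrix (fun i : ↥(Sᶜ) => (i : Fin n))
            (fun i : ↥(Sᶜ) => (i : Fin n))).submatrix e2 e2 := by
      ext i j; rfl
    rw [hAB, Matrix.det_submatrix_equiv_self]
  rw [hdet, smul_eq_mul]

open Matrix Finset Filter Topology

lemma det_nonneg_of_quadform {m : Type*} [Fintype m] [DecidableEq m]
    (M : Matrix m m ℝ) (h : ∀ v : m → ℝ, 0 ≤ v ⬝ᵥ (M *ᵥ v)) : 0 ≤ M.det := by
  classical
  set p : ℝ → ℝ := fun ε => (M + ε • (1 : Matrix m m ℝ)).det with hp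
  have hcont : Continuous p := by
    apply Continuous.matrix_det
    exact continuous_const.add (continuous_id.smul continuous_const)
  have hne : ∀ ε : ℝ, 0 < ε → p ε ≠ 0 := by
    intro ε hε h0
    obtain ⟨v, hv, hMv⟩ := (Matrix.exists_mulVec_eq_zero_iff).mpr h0
    have hvv : 0 < v ⬝ᵥ v := by
      rcases lt_or_eq_of_le (Finset.sum_nonneg fun i _ => mul_self_nonneg (v i)) with h' | h'
      · exact h'
      · exact absurd (dotProduct_self_eq_zero.mp h'.symm) hv
    have hzero : v ⬝ᵥ ((M + ε • (1 : Matrix m m ℝ)) *ᵥ v) = 0 := by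
      rw [hMv, dotProduct_zero]
    rw [Matrix.add_mulVec, Matrix.smul_mulVec, Matrix.one_mulVec,
      dotProduct_add, dotProduct_smul, smul_eq_mul] at hzero
    have := h v
    nlinarith
  -- find a point where p is positive
  set g : ℝ → ℝ := fun δ => (δ • M + (1 : Matrix m m ℝ)).det with hg
  have hgcont : Continuous g := by
    apply Continuous.matrix_det
    exact (continuous_id.smul continuous_const).add continuous_const
  have hg0 : g 0 = 1 := by simp [hg]
  have hgev : ∀ᶠ δ in 𝓝 (0 : ℝ), 0 < g δ := by
    have h1 : Tendsto g (𝓝 0) (𝓝 1) := by rw [← hg0]; exact hgcont.continuousAt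
    exact h1.eventually (eventually_gt_nhds one_pos)
  obtain ⟨δ0, hδ0, hball⟩ := Metric.eventually_nhds_iff.mp hgev
  set δ : ℝ := δ0 / 2 with hδ
  have hδpos : 0 < δ := by positivity
  have hgδ : 0 < g δ := by
    apply hball
    rw [Real.dist_eq, sub_zero, abs_of_pos hδpos]
    linarith
  have hpE : 0 < p δ⁻¹ := by
    have heq : M + δ⁻¹ • (1 : Matrix m m ℝ) = δ⁻¹ • (δ • M + (1 : Matrix m m ℝ)) := by
      rw [smul_add, smul_smul, inv_mul_cancel₀ hδpos.ne', one_smul]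
    have : p δ⁻¹ = (δ⁻¹) ^ Fintype.card m * g δ := by
      rw [hp]; simp only; rw [heq, Matrix.det_smul]
    rw [this]
    positivity
  have hpos : ∀ ε : ℝ, 0 < ε → 0 < p ε := by
    intro ε hε
    rcases lt_trichotomy (p ε) 0 with hlt | heq | hgt
    · exfalso
      have hsub : Set.uIcc (0:ℝ) 0 ⊆ Set.uIcc (p ε) (p δ⁻¹) := by
        rw [Set.uIcc_self]
        intro x hx
        simp only [Set.mem_singleton_iff] at hx
        subst hx
        exact Set.mem_uIcc.2 (Or.inl ⟨hlt.le, hpE.le⟩)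
      have := intermediate_value_uIcc (a := ε) (b := δ⁻¹) (f := p) hcont.continuousOn
      obtain ⟨c, hc, hpc⟩ := this (hsub (Set.mem_uIcc.2 (Or.inl ⟨le_refl 0, le_refl 0⟩)))
      have hcpos : 0 < c := lt_of_lt_of_le (lt_min hε (inv_pos.2 hδpos)) hc.1
      exact hne c hcpos hpc
    · exact absurd heq (hne ε hε)
    · exact hgt
  have hlim : Tendsto p (𝓝[>] (0:ℝ)) (𝓝 (p 0)) :=
    (hcont.tendsto 0).mono_left nhdsWithin_le_nhds
  have h0le : 0 ≤ p 0 := by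
    refine ge_of_tendsto hlim ?_
    filter_upwards [self_mem_nhdsWithin] with x hx
    exact (hpos x hx).le
  simpa [hp] using h0le

open Matrix Finset

lemma det_le_one_of_psd {m : Type*} [Fintype m] [DecidableEq m]
    {H : Matrix m m ℝ} (h1 : H.PosSemidef) (h2 : ((1 : Matrix m m ℝ) - H).PosSemidef) :
    H.det ≤ 1 := by
  have hH : H.IsHermitian := h1.1
  have hub : ∀ i, hH.eigenvalues i ≤ 1 := by
    intro i
    set v : m → ℝ := ⇑(hH.eigenvectorBasis i) with hv
    have hnorm : v ⬝ᵥ v = 1 := by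
      have h1n : ‖hH.eigenvectorBasis i‖ = 1 := hH.eigenvectorBasis.orthonormal.1 i
      rw [EuclideanSpace.norm_eq] at h1n
      have : ∑ j, ‖hH.eigenvectorBasis i j‖ ^ 2 = 1 := by
        have hnn : 0 ≤ ∑ j, ‖hH.eigenvectorBasis i j‖ ^ 2 :=
          Finset.sum_nonneg fun j _ => sq_nonneg _
        nlinarith [Real.sq_sqrt hnn, h1n]
      simpa [dotProduct, hv, Real.norm_eq_abs, sq, abs_mul_abs_self,
        ← sq_abs] using this
    have hq := h2.dotProduct_mulVec_nonneg v
    rw [star_trivial, Matrix.sub_mulVec, Matrix.one_mulVec, hv,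
      hH.mulVec_eigenvectorBasis, ← hv, dotProduct_sub, dotProduct_smul,
      hnorm, smul_eq_mul, mul_one] at hq
    linarith
  calc H.det = ∏ i, hH.eigenvalues i := by
        rw [hH.det_eq_prod_eigenvalues]; norm_num
    _ ≤ 1 := Finset.prod_le_one (fun i _ => h1.eigenvalues_nonneg i) (fun i _ => hub i)

lemma abs_det_le_one_of {m k : Type*} [Fintype m] [DecidableEq m] [Fintype k]
    (W : Matrix m m ℝ) (X : Matrix k m ℝ) (h : Wᵀ * W + Xᵀ * X = 1) : |W.det| ≤ 1 := by
  have h1 : (Wᵀ * W).PosSemidef := by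
    simpa [Matrix.conjTranspose_eq_transpose_of_trivial] using
      Matrix.posSemidef_conjTranspose_mul_self W
  have h2 : ((1 : Matrix m m ℝ) - Wᵀ * W).PosSemidef := by
    have : (1 : Matrix m m ℝ) - Wᵀ * W = Xᵀ * X := by rw [← h]; abel
    rw [this]
    simpa [Matrix.conjTranspose_eq_transpose_of_trivial] using
      Matrix.posSemidef_conjTranspose_mul_self X
  have hdet : W.det ^ 2 = (Wᵀ * W).det := by rw [Matrix.det_mul, Matrix.det_transpose, sq]
  have hle := det_le_one_of_psd h1 h2
  nlinarith [abs_nonneg W.det, sq_abs W.det]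

lemma abs_det_submatrix_le_one {n : ℕ} (V : Matrix (Fin n) (Fin n) ℝ) (hV : Vᵀ * V = 1)
    (S : Finset (Fin n)) :
    |(V.submatrix (fun i : ↥(Sᶜ) => (i : Fin n)) (fun i : ↥(Sᶜ) => (i : Fin n))).det| ≤ 1 := by
  classical
  apply abs_det_le_one_of _
    (V.submatrix (fun i : ↥S => (i : Fin n)) (fun i : ↥(Sᶜ) => (i : Fin n)))
  ext j j'
  have hVe : (Vᵀ * V) (j : Fin n) (j' : Fin n)
      = (1 : Matrix (Fin n) (Fin n) ℝ) (j : Fin n) (j' : Fin n) := by rw [hV]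
  rw [Matrix.mul_apply] at hVe
  simp only [Matrix.transpose_apply] at hVe
  have hsplit : ∑ i : ↥(Sᶜ), V (i : Fin n) (j : Fin n) * V (i : Fin n) (j' : Fin n)
      + ∑ i : ↥S, V (i : Fin n) (j : Fin n) * V (i : Fin n) (j' : Fin n)
      = ∑ i : Fin n, V i (j : Fin n) * V i (j' : Fin n) := by
    rw [Finset.sum_coe_sort Sᶜ (fun i => V i (j : Fin n) * V i (j' : Fin n)),
      Finset.sum_coe_sort S (fun i => V i (j : Fin n) * V i (j' : Fin n))]
    exact Finset.sum_compl_add_sum S _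
  simp only [Matrix.add_apply, Matrix.mul_apply, Matrix.transpose_apply, Matrix.submatrix_apply]
  rw [hsplit, hVe]
  by_cases hjj : j = j'
  · subst hjj; simp [Matrix.one_apply]
  · have hne : (j : Fin n) ≠ (j' : Fin n) := fun hc => hjj (Subtype.ext hc)
    simp [Matrix.one_apply, hne, hjj]

open Matrix Finset

section helpers

lemma sum_even_helper {α : Type*} [Fintype α] [DecidableEq α] (t : Finset α → ℝ) :
    ∑ S : Finset α, (1 + (-1 : ℝ) ^ S.card) * t S
      = 2 * ∑ S ∈ Finset.univ.filter (fun S : Finset α => Even S.card), t S := by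
  rw [Finset.mul_sum, Finset.sum_filter]
  refine Finset.sum_congr rfl fun S _ => ?_
  by_cases h : Even S.card
  · rw [if_pos h, Even.neg_one_pow h]; ring
  · rw [if_neg h, Odd.neg_one_pow (Nat.not_even_iff_odd.mp h)]; ring

end helpers

/-- For `Λ = diagonal lam` with `lam j ∈ (0,1]` and `V` real orthogonal, if
`det (Λ + V)` and `det (Λ − V)` are nonzero with the same sign, then
`|det (Λ + V)| + |det (Λ − V)|` equals twice the absolute value of the sum
over even-cardinality subsets `S` of `(∏_{j∈S} lam j) · det V_S` (with `V_S`
the submatrix of `V` deleting rows and columns in `S`), and consequently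
`|det (Λ + V)| + |det (Λ − V)| ≤ ∏ (1 + lam j) + ∏ (1 − lam j)`. -/
theorem det_sum_even_subsets
    (n : ℕ) (hn : 1 ≤ n) (lam : Fin n → ℝ)
    (hlam : ∀ j, 0 < lam j ∧ lam j ≤ 1)
    (V : Matrix (Fin n) (Fin n) ℝ) (hV : Vᵀ * V = 1)
    (hsign : 0 < (Matrix.diagonal lam + V).det * (Matrix.diagonal lam - V).det) :
    |(Matrix.diagonal lam + V).det| + |(Matrix.diagonal lam - V).det|
        = 2 * |∑ S ∈ Finset.univ.filter (fun S : Finset (Fin n) => Even S.card),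
            (∏ j ∈ S, lam j) *
              (V.submatrix (fun i : ↥(Sᶜ) => (i : Fin n))
                (fun i : ↥(Sᶜ) => (i : Fin n))).det| ∧
      |(Matrix.diagonal lam + V).det| + |(Matrix.diagonal lam - V).det|
        ≤ ∏ j, (1 + lam j) + ∏ j, (1 - lam j) := by
  classical
  set a : ℝ := (Matrix.diagonal lam + V).det with ha0
  set b : ℝ := (Matrix.diagonal lam - V).det with hb0
  set D : Finset (Fin n) → ℝ := fun S =>
    (V.submatrix (fun i : ↥(Sᶜ) => (i : Fin n)) (fun i : ↥(Sᶜ) => (i : Fin n))).det with hD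
  have ha : a = ∑ S : Finset (Fin n), (∏ j ∈ S, lam j) * D S := det_diag_add lam V
  have hb : b = ∑ S : Finset (Fin n),
      (∏ j ∈ S, lam j) * ((-1 : ℝ) ^ (n - S.card) * D S) := by
    rw [hb0, sub_eq_add_neg, det_diag_add lam (-V)]
    refine Finset.sum_congr rfl fun S _ => ?_
    have hneg : (-V).submatrix (fun i : ↥(Sᶜ) => (i : Fin n)) (fun i : ↥(Sᶜ) => (i : Fin n))
        = -(V.submatrix (fun i : ↥(Sᶜ) => (i : Fin n)) (fun i : ↥(Sᶜ) => (i : Fin n))) := rfl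
    rw [hneg, Matrix.det_neg, Fintype.card_coe, Finset.card_compl, Fintype.card_fin]
  -- n must be even
  have hne : Even n := by
    by_contra hno'
    have hno : Odd n := Nat.odd_iff.mpr (Nat.not_even_iff.mp hno')
    have hVVt : V * Vᵀ = 1 := mul_eq_one_comm.mp hV
    have hbt : b = (Matrix.diagonal lam - Vᵀ).det := by
      rw [hb0, ← Matrix.det_transpose (Matrix.diagonal lam - V), Matrix.transpose_sub,
        Matrix.diagonal_transpose]
    set N : Matrix (Fin n) (Fin n) ℝ := Matrix.diagonal (fun i => 1 - lam i * lam i) with hN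
    set K : Matrix (Fin n) (Fin n) ℝ :=
      Matrix.diagonal lam * Vᵀ - V * Matrix.diagonal lam with hK
    have hM : (Matrix.diagonal lam + V) * (Matrix.diagonal lam - Vᵀ) = -(N + K) := by
      have h1 : N = 1 - Matrix.diagonal lam * Matrix.diagonal lam := by
        rw [hN, Matrix.diagonal_mul_diagonal, ← Matrix.diagonal_one, ← Matrix.diagonal_sub]
      rw [h1, hK, ← hVVt]
      noncomm_ring
    have hquad : ∀ v : Fin n → ℝ, 0 ≤ v ⬝ᵥ ((N + K) *ᵥ v) := by
      intro v
      have hKzero : v ⬝ᵥ (K *ᵥ v) = 0 := by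
        have hKt : K = (V * Matrix.diagonal lam)ᵀ - V * Matrix.diagonal lam := by
          rw [hK, Matrix.transpose_mul, Matrix.diagonal_transpose]
        rw [hKt, Matrix.sub_mulVec, dotProduct_sub, Matrix.mulVec_transpose,
          Matrix.dotProduct_mulVec, dotProduct_comm, sub_self]
      have hNnn : 0 ≤ v ⬝ᵥ (N *ᵥ v) := by
        rw [hN]
        simp only [dotProduct, Matrix.mulVec_diagonal]
        refine Finset.sum_nonneg fun i _ => ?_
        obtain ⟨h1, h2⟩ := hlam i
        have h3 : 0 ≤ 1 - lam i * lam i := by nlinarith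
        have h4 := mul_nonneg h3 (mul_self_nonneg (v i))
        nlinarith
      rw [Matrix.add_mulVec, dotProduct_add, hKzero, add_zero]
      exact hNnn
    have hdetNK : 0 ≤ (N + K).det := det_nonneg_of_quadform _ hquad
    have hab : a * b = (-1 : ℝ) ^ n * (N + K).det := by
      rw [ha0, hbt, ← Matrix.det_mul, hM, Matrix.det_neg, Fintype.card_fin]
    rw [hab, Odd.neg_one_pow hno] at hsign
    nlinarith
  -- even case
  have hpow : ∀ S : Finset (Fin n), ((-1 : ℝ)) ^ (n - S.card) = (-1) ^ S.card := by
    intro S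
    have hcard : S.card ≤ n := by
      simpa [Fintype.card_fin] using Finset.card_le_univ S
    have h1 : (-1 : ℝ) ^ (n - S.card) * (-1) ^ S.card = (-1) ^ n := by
      rw [← pow_add, Nat.sub_add_cancel hcard]
    have h2 : ((-1 : ℝ) ^ S.card) * ((-1) ^ S.card) = 1 := by
      rw [← pow_add]; exact Even.neg_one_pow ⟨S.card, rfl⟩
    have hn1 : ((-1 : ℝ)) ^ n = 1 := Even.neg_one_pow hne
    calc (-1 : ℝ) ^ (n - S.card)
        = (-1 : ℝ) ^ (n - S.card) * (((-1) ^ S.card) * ((-1) ^ S.card)) := by rw [h2, mul_one]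
      _ = ((-1 : ℝ) ^ (n - S.card) * (-1) ^ S.card) * (-1) ^ S.card := by ring
      _ = (-1 : ℝ) ^ S.card := by rw [h1, hn1, one_mul]
  have key : a + b = 2 * ∑ S ∈ Finset.univ.filter (fun S : Finset (Fin n) => Even S.card),
      (∏ j ∈ S, lam j) * D S := by
    rw [ha, hb, ← Finset.sum_add_distrib,
      ← sum_even_helper (fun S => (∏ j ∈ S, lam j) * D S)]
    refine Finset.sum_congr rfl fun S _ => ?_
    rw [hpow S]
    ring
  have hsame : |a| + |b| = |a + b| := by
    rcases mul_pos_iff.mp hsign with ⟨ha1, hb1⟩ | ⟨ha1, hb1⟩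
    · rw [abs_of_pos ha1, abs_of_pos hb1, abs_of_pos (add_pos ha1 hb1)]
    · rw [abs_of_neg ha1, abs_of_neg hb1, abs_of_neg (add_neg ha1 hb1)]; ring
  have habs2 : |a| + |b|
      = 2 * |∑ S ∈ Finset.univ.filter (fun S : Finset (Fin n) => Even S.card),
          (∏ j ∈ S, lam j) * D S| := by
    rw [hsame, key, abs_mul, abs_two]
  refine ⟨habs2, ?_⟩
  -- the bound
  have hprodid : ∏ j, (1 + lam j) + ∏ j, (1 - lam j)
      = 2 * ∑ S ∈ Finset.univ.filter (fun S : Finset (Fin n) => Even S.card),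
          ∏ j ∈ S, lam j := by
    have hplus : ∏ j, (1 + lam j) = ∑ S : Finset (Fin n), ∏ j ∈ S, lam j := by
      have : ∀ j : Fin n, (1 : ℝ) + lam j = lam j + 1 := fun j => by ring
      simp_rw [this]
      rw [Finset.prod_add, Finset.powerset_univ]
      simp
    have hminus : ∏ j, (1 - lam j)
        = ∑ S : Finset (Fin n), (-1 : ℝ) ^ S.card * ∏ j ∈ S, lam j := by
      have : ∀ j : Fin n, (1 : ℝ) - lam j = (-lam j) + 1 := fun j => by ring
      simp_rw [this]
      rw [Finset.prod_add, Finset.powerset_univ]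
      refine Finset.sum_congr rfl fun S _ => ?_
      rw [Finset.prod_const_one, mul_one, ← Finset.prod_const (-1 : ℝ),
        ← Finset.prod_mul_distrib]
      exact Finset.prod_congr rfl fun j _ => by ring
    rw [hplus, hminus, ← Finset.sum_add_distrib,
      ← sum_even_helper (fun S => ∏ j ∈ S, lam j)]
    refine Finset.sum_congr rfl fun S _ => ?_
    ring
  rw [habs2, hprodid]
  have htri : |∑ S ∈ Finset.univ.filter (fun S : Finset (Fin n) => Even S.card),
          (∏ j ∈ S, lam j) * D S|
      ≤ ∑ S ∈ Finset.univ.filter (fun S : Finset (Fin n) => Even S.card),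
          ∏ j ∈ S, lam j := by
    refine (Finset.abs_sum_le_sum_abs _ _).trans (Finset.sum_le_sum fun S _ => ?_)
    rw [abs_mul]
    have hp : |∏ j ∈ S, lam j| = ∏ j ∈ S, lam j :=
      abs_of_nonneg (Finset.prod_nonneg fun j _ => (hlam j).1.le)
    calc |∏ j ∈ S, lam j| * |D S| ≤ |∏ j ∈ S, lam j| * 1 :=
          mul_le_mul_of_nonneg_left (abs_det_submatrix_le_one V hV S) (abs_nonneg _)
      _ = ∏ j ∈ S, lam j := by rw [mul_one, hp]
  linarith
end
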